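/- arXiv:2005.06030 — 10 statements merged into one kernel-verified Lean document; each statement's English description precedes it below -/
import Mathlib

section
/- Let L and N be positive integers and let λ_1,…,λ_N be complex numbers such that λ_k + i ≠ 0 for every k and λ_k − λ_l − i ≠ 0 for all k ≠ l. If the Bethe equations ((λ_k − i)/(λ_k + i))^L = ∏_{l≠k} (λ_k − λ_l + i)/(λ_k − λ_l − i) hold for every k = 1,…,N, then every λ_k is real (has zero imaginary part). -/
open Complex Finset

/-!
If some root had positive imaginary part, pick `λ_k` with maximal imaginary part. Then
`|λ_k - i| < |λ_k + i|`, and every `λ_k - λ_l` has nonnegative imaginary part, so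
`|λ_k - λ_l - i| ≤ |λ_k - λ_l + i|`: the left side of the `k`-th Bethe equation has modulus `< 1`
and the right side modulus `≥ 1`. Complex conjugation swaps the two sides of the equations between
moduli, so the same argument applied to `conj λ` excludes negative imaginary parts.
-/

open scoped ComplexConjugate

namespace Complex

lemma norm_add_I_sq_sub_norm_sub_I_sq (w : ℂ) : ‖w + I‖ ^ 2 - ‖w - I‖ ^ 2 = 4 * w.im := by
  simp only [Complex.sq_norm, normSq_apply, add_re, sub_re, add_im, sub_im, I_re, I_im]
  ring

lemma norm_sub_I_le_norm_add_I_iff (w : ℂ) : ‖w - I‖ ≤ ‖w + I‖ ↔ 0 ≤ w.im := by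
  rw [← sq_le_sq₀ (norm_nonneg _) (norm_nonneg _)]
  constructor <;> intro h <;> linarith [norm_add_I_sq_sub_norm_sub_I_sq w]

lemma norm_sub_I_lt_norm_add_I_iff (w : ℂ) : ‖w - I‖ < ‖w + I‖ ↔ 0 < w.im := by
  rw [← sq_lt_sq₀ (norm_nonneg _) (norm_nonneg _)]
  constructor <;> intro h <;> linarith [norm_add_I_sq_sub_norm_sub_I_sq w]

lemma norm_conj_sub_I (w : ℂ) : ‖conj w - I‖ = ‖w + I‖ := by
  rw [← norm_conj, map_sub, conj_conj, conj_I, sub_neg_eq_add]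

lemma norm_conj_add_I (w : ℂ) : ‖conj w + I‖ = ‖w - I‖ := by
  rw [← norm_conj, map_add, conj_conj, conj_I, ← sub_eq_add_neg]

end Complex

section BetheNorm

variable {ι : Type*} [Fintype ι] [DecidableEq ι]

def BetheNormEq (L : ℕ) (lam : ι → ℂ) : Prop :=
  ∀ k, ‖lam k - I‖ ^ L * ∏ l ∈ univ.erase k, ‖lam k - lam l - I‖ =
    ‖lam k + I‖ ^ L * ∏ l ∈ univ.erase k, ‖lam k - lam l + I‖

lemma betheNormEq_of_bethe {L : ℕ} {lam : ι → ℂ} (h1 : ∀ k, lam k + I ≠ 0)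
    (h2 : ∀ k l, k ≠ l → lam k - lam l - I ≠ 0)
    (hbethe : ∀ k, ((lam k - I) / (lam k + I)) ^ L =
      ∏ l ∈ univ.erase k, (lam k - lam l + I) / (lam k - lam l - I)) :
    BetheNormEq L lam := by
  intro k
  have hnorm := congrArg (‖·‖) (hbethe k)
  simp only [norm_pow, norm_prod, norm_div, div_pow, prod_div_distrib] at hnorm
  have hden : ∏ l ∈ univ.erase k, ‖lam k - lam l - I‖ ≠ 0 :=
    prod_ne_zero_iff.mpr fun l hl => norm_ne_zero_iff.mpr (h2 k l (ne_of_mem_erase hl).symm)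
  rw [div_eq_div_iff (pow_ne_zero _ (norm_ne_zero_iff.mpr (h1 k))) hden] at hnorm
  rw [hnorm, mul_comm]

lemma BetheNormEq.conj {L : ℕ} {lam : ι → ℂ} (h : BetheNormEq L lam) :
    BetheNormEq L (fun k => conj (lam k)) := by
  intro k
  simp only [← map_sub, norm_conj_sub_I, norm_conj_add_I]
  exact (h k).symm

lemma BetheNormEq.im_nonpos_of_isMax {L : ℕ} {lam : ι → ℂ} (h : BetheNormEq L lam) (hL : L ≠ 0)
    (h2 : ∀ k l, k ≠ l → lam k - lam l - I ≠ 0) {k : ι} (hk : ∀ l, (lam l).im ≤ (lam k).im) :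
    (lam k).im ≤ 0 := by
  by_contra! hpos
  have hpow : ‖lam k - I‖ ^ L < ‖lam k + I‖ ^ L :=
    pow_lt_pow_left₀ ((norm_sub_I_lt_norm_add_I_iff _).mpr hpos) (norm_nonneg _) hL
  have hprod : ∏ l ∈ univ.erase k, ‖lam k - lam l - I‖ ≤ ∏ l ∈ univ.erase k, ‖lam k - lam l + I‖ :=
    prod_le_prod (fun _ _ => norm_nonneg _) fun l _ =>
      (norm_sub_I_le_norm_add_I_iff _).mpr (by simpa [sub_nonneg] using hk l)
  have hden : 0 < ∏ l ∈ univ.erase k, ‖lam k - lam l - I‖ :=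
    prod_pos fun l hl => norm_pos_iff.mpr (h2 k l (ne_of_mem_erase hl).symm)
  refine (h k).not_lt ?_
  calc ‖lam k - I‖ ^ L * ∏ l ∈ univ.erase k, ‖lam k - lam l - I‖
      < ‖lam k + I‖ ^ L * ∏ l ∈ univ.erase k, ‖lam k - lam l - I‖ :=
        mul_lt_mul_of_pos_right hpow hden
    _ ≤ ‖lam k + I‖ ^ L * ∏ l ∈ univ.erase k, ‖lam k - lam l + I‖ :=
        mul_le_mul_of_nonneg_left hprod (by positivity)

end BetheNorm

theorem bethe_roots_real_general (L N : ℕ) (hL : 0 < L) (lam : Fin N → ℂ)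
    (h1 : ∀ k, lam k + I ≠ 0)
    (h2 : ∀ k l, k ≠ l → lam k - lam l - I ≠ 0)
    (hbethe : ∀ k, ((lam k - I) / (lam k + I)) ^ L =
      ∏ l ∈ Finset.univ.erase k, (lam k - lam l + I) / (lam k - lam l - I)) :
    ∀ k, (lam k).im = 0 := by
  intro k
  have hnorm : BetheNormEq L lam := betheNormEq_of_bethe h1 h2 hbethe
  have h2_conj : ∀ k l, k ≠ l → conj (lam k) - conj (lam l) - I ≠ 0 := by
    intro k l hkl hzero
    rw [← map_sub, ← norm_eq_zero, norm_conj_sub_I, norm_eq_zero] at hzero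
    exact h2 l k hkl.symm (by linear_combination -hzero)
  have : Nonempty (Fin N) := ⟨k⟩
  obtain ⟨k₀, hk₀⟩ := Finite.exists_max fun l => (lam l).im
  obtain ⟨k₁, hk₁⟩ := Finite.exists_min fun l => (lam l).im
  have hmax : (lam k₀).im ≤ 0 := hnorm.im_nonpos_of_isMax hL.ne' h2 hk₀
  have hmin : (conj (lam k₁)).im ≤ 0 :=
    hnorm.conj.im_nonpos_of_isMax hL.ne' h2_conj fun l => by simpa using hk₁ l
  rw [conj_im, neg_nonpos] at hmin
  linarith [hk₀ k, hk₁ k]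

/-- For the spin `s = -1` Bethe equations, all Bethe roots are real. -/
theorem bethe_roots_real (L N : ℕ) (hL : 0 < L) (hN : 0 < N) (lam : Fin N → ℂ)
    (h1 : ∀ k, lam k + I ≠ 0)
    (h2 : ∀ k l, k ≠ l → lam k - lam l - I ≠ 0)
    (hbethe : ∀ k, ((lam k - I) / (lam k + I)) ^ L =
      ∏ l ∈ Finset.univ.erase k, (lam k - lam l + I) / (lam k - lam l - I)) :
    ∀ k, (lam k).im = 0 :=
  bethe_roots_real_general L N hL lam h1 h2 hbethe
end

section
/- Let L and N be positive integers and I_1,…,I_N real numbers. Let A : ℝ → ℝ be A(x) = x·arctan x − (1/2)·log(1+x²) (the antiderivative of arctan vanishing at 0), and define M : ℝ^N → ℝ by M(λ_1,…,λ_N) = (1/π)·∑_{k=1}^N A(λ_k) − (1/L)·∑_{k=1}^N λ_k I_k + (1/(2πL))·∑_{k=1}^N ∑_{l=1}^N A(λ_k − λ_l). Then M is strictly convex on ℝ^N. -/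
/-!
`A' = arctan` is strictly increasing, so `A` is strictly convex. Consequently
`λ ↦ ∑ₖ A(λₖ)` is strictly convex on `ℝ^N`, while `λ ↦ ∑ₖ ∑ₗ A(λₖ - λₗ)` is convex as a sum of
`A` composed with the linear forms `λ ↦ λₖ - λₗ`. The middle term of `M` is linear, and a strictly
convex function plus a convex one is strictly convex.
-/

open Real Finset

/-- The antiderivative of `arctan` vanishing at `0`. -/
noncomputable def arctanAntideriv (x : ℝ) : ℝ :=
  x * arctan x - (1 / 2) * Real.log (1 + x ^ 2)

section Convexity

variable {𝕜 E β ι : Type*}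

theorem StrictConvexOn.smul [CommSemiring 𝕜] [PartialOrder 𝕜] [AddCommMonoid E] [SMul 𝕜 E]
    [AddCommMonoid β] [PartialOrder β] [Module 𝕜 β] [PosSMulStrictMono 𝕜 β]
    {s : Set E} {f : E → β} {c : 𝕜} (hc : 0 < c) (hf : StrictConvexOn 𝕜 s f) :
    StrictConvexOn 𝕜 s fun x => c • f x :=
  ⟨hf.1, fun x hx y hy hxy a b ha hb hab =>
    calc
      c • f (a • x + b • y) < c • (a • f x + b • f y) :=
        smul_lt_smul_of_pos_left (hf.2 hx hy hxy ha hb hab) hc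
      _ = a • c • f x + b • c • f y := by rw [smul_add, smul_comm c, smul_comm c]⟩

variable [Semiring 𝕜] [PartialOrder 𝕜] [AddCommMonoid β] [PartialOrder β] [Module 𝕜 β]

theorem ConvexOn.finset_sum [AddCommMonoid E] [Module 𝕜 E] [IsOrderedAddMonoid β]
    {s : Set E} {t : Finset ι} {f : ι → E → β} (hs : Convex 𝕜 s)
    (hf : ∀ i ∈ t, ConvexOn 𝕜 s (f i)) : ConvexOn 𝕜 s fun x => ∑ i ∈ t, f i x := by
  classical
  induction t using Finset.induction_on with
  | empty => simpa only [sum_empty] using convexOn_const (0 : β) hs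
  | insert i t hi ih =>
    simp only [sum_insert hi]
    exact (hf i (mem_insert_self i t)).add (ih fun j hj => hf j (mem_insert_of_mem hj))

theorem StrictConvexOn.sum_comp_apply [Fintype ι] [AddCommMonoid E] [Module 𝕜 E]
    [IsOrderedCancelAddMonoid β] {s : Set E} {f : E → β} (hf : StrictConvexOn 𝕜 s f) :
    StrictConvexOn 𝕜 (Set.univ.pi fun _ : ι => s) fun x => ∑ i, f (x i) := by
  refine ⟨convex_pi fun _ _ => hf.1, fun x hx y hy hxy a b ha hb hab => ?_⟩
  obtain ⟨i, hi⟩ := Function.ne_iff.mp hxy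
  simp only [smul_sum, ← sum_add_distrib, Pi.add_apply, Pi.smul_apply]
  exact sum_lt_sum
    (fun j _ => hf.convexOn.2 (hx j trivial) (hy j trivial) ha.le hb.le hab)
    ⟨i, mem_univ i, hf.2 (hx i trivial) (hy i trivial) hi ha hb hab⟩

theorem ConvexOn.sum_sum_comp_sub [Fintype ι] [AddCommGroup E] [Module 𝕜 E]
    [IsOrderedAddMonoid β] {f : E → β} (hf : ConvexOn 𝕜 Set.univ f) :
    ConvexOn 𝕜 Set.univ fun x : ι → E => ∑ k, ∑ l, f (x k - x l) :=
  ConvexOn.finset_sum convex_univ fun k _ => ConvexOn.finset_sum convex_univ fun l _ =>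
    (hf.comp_linearMap (LinearMap.proj (R := 𝕜) (φ := fun _ : ι => E) k - LinearMap.proj l) :)

end Convexity

theorem hasDerivAt_arctanAntideriv (x : ℝ) : HasDerivAt arctanAntideriv (arctan x) x := by
  have hlog : HasDerivAt (fun x : ℝ => Real.log (1 + x ^ 2)) (2 * x / (1 + x ^ 2)) x := by
    simpa using ((hasDerivAt_pow 2 x).const_add 1).log (by positivity)
  refine (((hasDerivAt_id' x).mul (hasDerivAt_arctan x)).sub
    (hlog.const_mul (1 / 2))).congr_deriv ?_
  field_simp
  ring

theorem deriv_arctanAntideriv : deriv arctanAntideriv = arctan :=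
  funext fun x => (hasDerivAt_arctanAntideriv x).deriv

theorem strictConvexOn_arctanAntideriv : StrictConvexOn ℝ Set.univ arctanAntideriv :=
  StrictMono.strictConvexOn_univ_of_deriv
    (continuous_iff_continuousAt.2 fun x => (hasDerivAt_arctanAntideriv x).continuousAt)
    (deriv_arctanAntideriv ▸ arctan_strictMono)

theorem yangYang_strictConvexOn_general (L N : ℕ)
    (Inum : Fin N → ℝ) :
    StrictConvexOn ℝ Set.univ (fun lam : Fin N → ℝ =>
      (1 / π) * ∑ k, arctanAntideriv (lam k)
        - (1 / L) * ∑ k, lam k * Inum k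
        + (1 / (2 * π * L)) * ∑ k, ∑ l, arctanAntideriv (lam k - lam l)) := by
  have hsingle : StrictConvexOn ℝ Set.univ fun lam : Fin N → ℝ =>
      (1 / π) * ∑ k, arctanAntideriv (lam k) := by
    have h := (strictConvexOn_arctanAntideriv.sum_comp_apply (ι := Fin N)).smul
      (one_div_pos.2 pi_pos)
    rwa [Set.pi_univ] at h
  have hlinear : ConcaveOn ℝ Set.univ fun lam : Fin N → ℝ => (1 / L) * ∑ k, lam k * Inum k :=
    ((Fintype.linearCombination ℝ Inum).concaveOn convex_univ).smul (by positivity)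
  have hpair : ConvexOn ℝ Set.univ fun lam : Fin N → ℝ =>
      (1 / (2 * π * L)) * ∑ k, ∑ l, arctanAntideriv (lam k - lam l) :=
    strictConvexOn_arctanAntideriv.convexOn.sum_sum_comp_sub.smul (by positivity)
  exact (hsingle.sub_concaveOn hlinear).add_convexOn hpair

/-- The Yang–Yang-type function `M` is strictly convex on `ℝ^N`. -/
theorem yangYang_strictConvexOn (L N : ℕ) (hL : 0 < L) (hN : 0 < N)
    (Inum : Fin N → ℝ) :
    StrictConvexOn ℝ Set.univ (fun lam : Fin N → ℝ =>
      (1 / π) * ∑ k, arctanAntideriv (lam k)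
        - (1 / L) * ∑ k, lam k * Inum k
        + (1 / (2 * π * L)) * ∑ k, ∑ l, arctanAntideriv (lam k - lam l)) :=
  yangYang_strictConvexOn_general L N Inum
end

section
/- Let L and N be positive integers and let I_1 < I_2 < … < I_N be real numbers such that 2·I_k ∈ ℤ for every k, I_k − I_l ∈ ℤ for all k, l (all I_k are integers or all are half-odd-integers), and −(L+N−1)/2 < I_k < (L+N−1)/2 for every k. Then there exists exactly one tuple (λ_1,…,λ_N) ∈ ℝ^N satisfying the logarithmic Bethe equations (1/π)·arctan λ_k = I_k/L − (1/(πL))·∑_{l=1}^N arctan(λ_k − λ_l) for every k = 1,…,N. -/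
/-!
The Bethe equations are the critical-point equations of the Yang–Yang action
`B(λ) = L ∑ₖ G(λₖ) + ½ ∑ₖₗ G(λₖ - λₗ) - π ∑ₖ Iₖ λₖ`, where `G' = arctan`.
Since `arctan` is strictly increasing, the gradient of `B` is a strictly monotone map, so it has at
most one zero. For existence, `G` is convex with slopes tending to `π/2`, so `G(x) ≳ (π/2)|x|`.
Because consecutive Bethe numbers differ by at least `1`, the admissible range forces
`Iₖ = cₖ + Jₖ` with `cₖ = (2k + 1 - N)/2` and `|Jₖ| < L/2`, while
`∑ₖ cₖ vₖ ≤ ¼ ∑ₖₗ |vₖ - vₗ|`. Hence `B` grows linearly at infinity and attains its minimum.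
-/

open Real Finset Filter Topology

lemma ConvexOn.add_mul_sub_le_of_hasDerivAt {S : Set ℝ} {f : ℝ → ℝ} {f' t x : ℝ}
    (hf : ConvexOn ℝ S f) (htS : t ∈ S) (hxS : x ∈ S) (ht : HasDerivAt f f' t) :
    f t + f' * (x - t) ≤ f x := by
  rcases lt_trichotomy x t with hxt | rfl | htx
  · have h := hf.slope_le_of_hasDerivAt hxS htS hxt ht
    rw [slope_def_field, div_le_iff₀ (sub_pos.2 hxt)] at h
    linarith
  · simp
  · have h := hf.le_slope_of_hasDerivAt htS hxS htx ht
    rw [slope_def_field, le_div_iff₀ (sub_pos.2 htx)] at h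
    linarith

noncomputable def arctanPrimitive (x : ℝ) : ℝ := x * arctan x - log (1 + x ^ 2) / 2

lemma hasDerivAt_arctanPrimitive (x : ℝ) : HasDerivAt arctanPrimitive (arctan x) x := by
  have hpos : 1 + x ^ 2 ≠ 0 := by positivity
  have h : HasDerivAt arctanPrimitive _ x := ((hasDerivAt_id x).mul (hasDerivAt_arctan x)).sub
    ((((hasDerivAt_pow 2 x).const_add 1).log hpos).div_const 2)
  refine h.congr_deriv ?_
  simp only [id]
  field_simp
  ring

@[fun_prop]
lemma continuous_arctanPrimitive : Continuous arctanPrimitive :=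
  continuous_iff_continuousAt.2 fun x => (hasDerivAt_arctanPrimitive x).continuousAt

lemma arctanPrimitive_neg (x : ℝ) : arctanPrimitive (-x) = arctanPrimitive x := by
  simp [arctanPrimitive, arctan_neg]

lemma convexOn_arctanPrimitive : ConvexOn ℝ Set.univ arctanPrimitive := by
  have hderiv : deriv arctanPrimitive = arctan :=
    funext fun x => (hasDerivAt_arctanPrimitive x).deriv
  exact Monotone.convexOn_univ_of_deriv (fun x => (hasDerivAt_arctanPrimitive x).differentiableAt)
    (hderiv ▸ arctan_strictMono.monotone)

lemma arctan_mul_abs_sub_le_arctanPrimitive (t x : ℝ) :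
    arctan t * |x| - log (1 + t ^ 2) / 2 ≤ arctanPrimitive x := by
  have key : ∀ y, arctan t * y - log (1 + t ^ 2) / 2 ≤ arctanPrimitive y := fun y => by
    have := convexOn_arctanPrimitive.add_mul_sub_le_of_hasDerivAt (Set.mem_univ t)
      (Set.mem_univ y) (hasDerivAt_arctanPrimitive t)
    rw [arctanPrimitive] at this
    linarith
  rcases le_total 0 x with hx | hx
  · rw [abs_of_nonneg hx]; exact key x
  · rw [abs_of_nonpos hx, ← arctanPrimitive_neg]; exact key (-x)

lemma exists_arctan_gt {δ : ℝ} (hδ : 0 < δ) : ∃ t, π / 2 - δ < arctan t :=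
  ((tendsto_arctan_atTop.mono_right nhdsWithin_le_nhds).eventually
    (lt_mem_nhds (by linarith))).exists

lemma sum_sum_mul_eq_half_sum_sum_mul_sub {ι : Type*} [Fintype ι] (f : ι → ι → ℝ)
    (hf : ∀ k l, f l k = -f k l) (v : ι → ℝ) :
    ∑ k, ∑ l, f k l * v k = (∑ k, ∑ l, f k l * (v k - v l)) / 2 := by
  have hswap : ∑ k, ∑ l, f k l * v l = -∑ k, ∑ l, f k l * v k := by
    rw [sum_comm, ← sum_neg_distrib]
    refine sum_congr rfl fun k _ => ?_
    rw [← sum_neg_distrib]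
    refine sum_congr rfl fun l _ => ?_
    rw [hf, neg_mul]
  simp only [mul_sub, sum_sub_distrib, hswap]
  ring

section YangYang

variable {ι : Type*} [Fintype ι]

noncomputable def yangYangAction (L : ℝ) (I lam : ι → ℝ) : ℝ :=
  L * ∑ k, arctanPrimitive (lam k) + (∑ k, ∑ l, arctanPrimitive (lam k - lam l)) / 2
    - π * ∑ k, I k * lam k

noncomputable def betheResidual (L : ℝ) (I lam : ι → ℝ) (k : ι) : ℝ :=
  L * arctan (lam k) + ∑ l, arctan (lam k - lam l) - π * I k

lemma continuous_yangYangAction (L : ℝ) (I : ι → ℝ) : Continuous (yangYangAction L I) := by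
  unfold yangYangAction
  fun_prop

lemma hasDerivAt_yangYangAction_add_smul (L : ℝ) (I lam v : ι → ℝ) :
    HasDerivAt (fun s : ℝ => yangYangAction L I (lam + s • v))
      (∑ k, betheResidual L I lam k * v k) 0 := by
  have hcoord : ∀ k, HasDerivAt (fun s : ℝ => (lam + s • v) k) (v k) 0 := fun k => by
    simpa using ((hasDerivAt_id (0 : ℝ)).mul_const (v k)).const_add (lam k)
  have hG : ∀ {g : ℝ → ℝ} {g' : ℝ}, HasDerivAt g g' 0 →
      HasDerivAt (fun s => arctanPrimitive (g s)) (arctan (g 0) * g') 0 :=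
    fun hg => (hasDerivAt_arctanPrimitive _).comp 0 hg
  have h : HasDerivAt (fun s : ℝ => yangYangAction L I (lam + s • v)) _ 0 :=
    (((HasDerivAt.fun_sum fun k _ => hG (hcoord k)).const_mul L).add
      ((HasDerivAt.fun_sum fun k _ => HasDerivAt.fun_sum fun l _ =>
        hG ((hcoord k).sub (hcoord l))).div_const 2)).sub
      ((HasDerivAt.fun_sum fun k _ => (hcoord k).const_mul (I k)).const_mul π)
  refine h.congr_deriv ?_
  simp only [Pi.sub_apply, Pi.add_apply, zero_smul, Pi.zero_apply, add_zero]
  rw [← sum_sum_mul_eq_half_sum_sum_mul_sub _ (fun k l => by rw [← arctan_neg, neg_sub])]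
  simp only [betheResidual, add_mul, sub_mul, sum_add_distrib,
    sum_sub_distrib, mul_sum, sum_mul]
  ring_nf

lemma betheResidual_eq_zero_of_forall_le {L : ℝ} {I lam : ι → ℝ}
    (hmin : ∀ mu, yangYangAction L I lam ≤ yangYangAction L I mu) (k : ι) :
    betheResidual L I lam k = 0 := by
  classical
  have hloc : IsLocalMin (fun s : ℝ => yangYangAction L I (lam + s • Pi.single k 1)) 0 :=
    Eventually.of_forall fun s => by simpa using hmin _
  simpa [Pi.single_apply] using
    hloc.hasDerivAt_eq_zero (hasDerivAt_yangYangAction_add_smul L I lam _)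

lemma eq_of_betheResidual_eq_zero {L : ℝ} (hL : 0 < L) {I lam mu : ι → ℝ}
    (hlam : ∀ k, betheResidual L I lam k = 0) (hmu : ∀ k, betheResidual L I mu k = 0) :
    lam = mu := by
  have harctan : ∀ x y, 0 ≤ (arctan x - arctan y) * (x - y) := fun x y =>
    (monovary_id_iff.2 arctan_strictMono.monotone).sub_mul_sub_nonneg y x
  set d : ι → ℝ := fun k => (arctan (mu k) - arctan (lam k)) * (mu k - lam k)
  have hpair : 0 ≤ ∑ k, ∑ l,
      (arctan (mu k - mu l) - arctan (lam k - lam l)) * (mu - lam) k := by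
    rw [sum_sum_mul_eq_half_sum_sum_mul_sub _
      (fun k l => by rw [← neg_sub (mu k), ← neg_sub (lam k), arctan_neg, arctan_neg]; ring)]
    refine div_nonneg (sum_nonneg fun k _ => sum_nonneg fun l _ => ?_) two_pos.le
    rw [show (mu - lam) k - (mu - lam) l = mu k - mu l - (lam k - lam l) by
      simp only [Pi.sub_apply]; ring]
    exact harctan _ _
  have hsplit : L * ∑ k, d k
      + ∑ k, ∑ l, (arctan (mu k - mu l) - arctan (lam k - lam l)) * (mu - lam) k = 0 := by
    rw [mul_sum, ← sum_add_distrib]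
    refine sum_eq_zero fun k _ => ?_
    have hk : betheResidual L I mu k - betheResidual L I lam k = 0 := by rw [hlam, hmu, sub_zero]
    simp only [betheResidual, d, Pi.sub_apply, ← sum_mul, sum_sub_distrib] at hk ⊢
    linear_combination (mu k - lam k) * hk
  have hd : ∑ k, d k = 0 := by
    have := sum_nonneg fun k (_ : k ∈ univ) => harctan (mu k) (lam k)
    nlinarith
  funext k
  rcases mul_eq_zero.1 ((sum_eq_zero_iff_of_nonneg fun k _ => harctan (mu k) (lam k)).1 hd k
    (mem_univ k)) with h | h
  · exact (arctan_strictMono.injective (sub_eq_zero.1 h)).symm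
  · exact (sub_eq_zero.1 h).symm

lemma tendsto_yangYangAction_cocompact {L ε : ℝ} {I : ι → ℝ} (hL : 0 ≤ L) (hε : 0 < ε)
    (hI : ∀ v : ι → ℝ,
      ∑ k, I k * v k ≤ (L / 2 - ε) * ∑ k, |v k| + (∑ k, ∑ l, |v k - v l|) / 4) :
    Tendsto (yangYangAction L I) (cocompact (ι → ℝ)) atTop := by
  set n : ℝ := (Fintype.card ι : ℝ)
  obtain ⟨t, ht⟩ := exists_arctan_gt (δ := π * ε / (2 * (L + n + 1))) (by positivity)
  set α := arctan t
  set c := log (1 + t ^ 2) / 2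
  have hα : α < π / 2 := arctan_lt_pi_div_two t
  have hLn : 0 < L + n + 1 := by positivity
  have hδ : (L + n) * (π / 2 - α) ≤ π * ε / 2 := calc
    (L + n) * (π / 2 - α) ≤ (L + n + 1) * (π / 2 - α) := by linarith
    _ ≤ (L + n + 1) * (π * ε / (2 * (L + n + 1))) := by gcongr; linarith
    _ = π * ε / 2 := by field_simp
  -- `arctanPrimitive x ≥ α |x| - c`, with `α` so close to `π / 2` that the loss
  -- `(L + n) (π / 2 - α)` in the linear growth rate eats at most half of the margin `ε`
  have hbound : ∀ lam : ι → ℝ,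
      π * ε / 2 * ‖lam‖ + -(L * n * c + n ^ 2 * c / 2) ≤ yangYangAction L I lam := by
    intro lam
    set S := ∑ k, |lam k|
    set T := ∑ k, ∑ l, |lam k - lam l|
    have hS : 0 ≤ S := sum_nonneg fun k _ => abs_nonneg _
    have hnorm : ‖lam‖ ≤ S := (pi_norm_le_iff_of_nonneg hS).2 fun k =>
      single_le_sum (f := fun k => |lam k|) (fun _ _ => abs_nonneg _) (mem_univ k)
    have hT : T ≤ 2 * n * S := calc
      T ≤ ∑ k, ∑ l, (|lam k| + |lam l|) :=
        sum_le_sum fun k _ => sum_le_sum fun l _ => abs_sub _ _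
      _ = 2 * n * S := by
        simp only [sum_add_distrib, sum_const, card_univ, nsmul_eq_mul, ← mul_sum, n, S]
        ring
    have h1 : α * S - n * c ≤ ∑ k, arctanPrimitive (lam k) := calc
      α * S - n * c = ∑ k, (α * |lam k| - c) := by simp [mul_sum, S, n]
      _ ≤ _ := sum_le_sum fun k _ => arctan_mul_abs_sub_le_arctanPrimitive t _
    have h2 : α * T - n ^ 2 * c ≤ ∑ k, ∑ l, arctanPrimitive (lam k - lam l) := calc
      α * T - n ^ 2 * c = ∑ k, ∑ l, (α * |lam k - lam l| - c) := by
        simp only [mul_sum, sum_sub_distrib, sum_const, card_univ, nsmul_eq_mul, T, n]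
        ring
      _ ≤ _ := sum_le_sum fun k _ => sum_le_sum fun l _ =>
        arctan_mul_abs_sub_le_arctanPrimitive t _
    have := mul_le_mul_of_nonneg_left h1 hL
    have := mul_le_mul_of_nonneg_left hT (show 0 ≤ π / 4 - α / 2 by linarith)
    have := mul_le_mul_of_nonneg_right hδ hS
    have := mul_le_mul_of_nonneg_left (hI lam) pi_pos.le
    have := mul_le_mul_of_nonneg_left hnorm (by positivity : 0 ≤ π * ε / 2)
    unfold yangYangAction
    linarith
  exact tendsto_atTop_mono hbound
    (tendsto_atTop_add_const_right _ _ (tendsto_norm_cocompact_atTop.const_mul_atTop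
      (by positivity)))

lemma betheEquation_iff {L : ℝ} (hL : L ≠ 0) (I lam : ι → ℝ) (k : ι) :
    (1 / π) * arctan (lam k) = I k / L - (1 / (π * L)) * ∑ l, arctan (lam k - lam l) ↔
      betheResidual L I lam k = 0 := by
  rw [betheResidual, sub_eq_zero]
  field_simp
  constructor <;> intro h <;> linarith

end YangYang

section BetheNumbers
variable {N : ℕ} {I : Fin N → ℝ}

lemma monotone_sub_val (hmono : StrictMono I) (hdiff : ∀ k l, ∃ n : ℤ, I k - I l = n) :
    Monotone fun k : Fin N => I k - k := by
  cases N with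
  | zero => exact fun i => i.elim0
  | succ N =>
    refine Fin.monotone_iff_le_succ.2 fun i => ?_
    obtain ⟨m, hm⟩ := hdiff i.succ i.castSucc
    have hpos : (0 : ℝ) < m := hm ▸ sub_pos.2 (hmono i.castSucc_lt_succ)
    have hone : (1 : ℝ) ≤ m := by exact_mod_cast Int.cast_pos.1 hpos
    simp only [Fin.val_castSucc, Fin.val_succ, Nat.cast_add, Nat.cast_one]
    linarith

lemma abs_sub_centered_lt {L : ℝ} (hmono : StrictMono I)
    (hdiff : ∀ k l, ∃ n : ℤ, I k - I l = n)
    (hbound : ∀ k, -((L + N - 1) / 2) < I k ∧ I k < (L + N - 1) / 2) (k : Fin N) :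
    |I k - (2 * k + 1 - N) / 2| < L / 2 := by
  have hk := k.isLt
  have hmon := monotone_sub_val hmono hdiff
  have hfirst := hmon (show (⟨0, by omega⟩ : Fin N) ≤ k from Nat.zero_le _)
  have hlast := hmon (show k ≤ ⟨N - 1, by omega⟩ from Nat.le_sub_one_of_lt k.isLt)
  have hcast : ((N - 1 : ℕ) : ℝ) = N - 1 := by rw [Nat.cast_sub (by omega), Nat.cast_one]
  simp only [hcast, Nat.cast_zero, sub_zero] at hfirst hlast
  rw [abs_lt]
  constructor <;> linarith [(hbound ⟨0, by omega⟩).1, (hbound ⟨N - 1, by omega⟩).2]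

lemma sum_centered_mul_le (v : Fin N → ℝ) :
    ∑ k : Fin N, (2 * k + 1 - N) / 2 * v k ≤ (∑ k, ∑ l, |v k - v l|) / 4 := by
  set s : Fin N → Fin N → ℝ := fun k l => (if l < k then 1 else 0) - if k < l then 1 else 0
  have hs : ∀ k, ∑ l, s k l = 2 * k + 1 - N := fun k => by
    have hk := k.isLt
    simp only [s, sum_sub_distrib, sum_boole]
    rw [filter_gt_eq_Iio, filter_lt_eq_Ioi, Fin.card_Iio, Fin.card_Ioi,
      Nat.cast_sub (by omega), Nat.cast_sub (by omega)]
    ring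
  calc ∑ k : Fin N, (2 * k + 1 - N) / 2 * v k
      = (∑ k, ∑ l, s k l * v k) / 2 := by
        rw [sum_div]
        refine sum_congr rfl fun k _ => ?_
        rw [← sum_mul, hs]
        ring
    _ = (∑ k, ∑ l, s k l * (v k - v l)) / 4 := by
        rw [sum_sum_mul_eq_half_sum_sum_mul_sub s (fun k l => by simp only [s]; ring)]
        ring
    _ ≤ (∑ k, ∑ l, |v k - v l|) / 4 := by
        gcongr with k _ l _
        simp only [s]
        split_ifs <;> linarith [le_abs_self (v k - v l), neg_abs_le (v k - v l)]

lemma exists_pos_sum_mul_le {L : ℝ} (hmono : StrictMono I)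
    (hdiff : ∀ k l, ∃ n : ℤ, I k - I l = n)
    (hbound : ∀ k, -((L + N - 1) / 2) < I k ∧ I k < (L + N - 1) / 2) :
    ∃ ε > 0, ∀ v : Fin N → ℝ,
      ∑ k, I k * v k ≤ (L / 2 - ε) * ∑ k, |v k| + (∑ k, ∑ l, |v k - v l|) / 4 := by
  have hε : ∀ᶠ ε in 𝓝[>] (0 : ℝ), ∀ k, |I k - (2 * k + 1 - N) / 2| < L / 2 - ε :=
    nhdsWithin_le_nhds <| eventually_all.2 fun k =>
      continuousAt_const.eventually_lt (continuousAt_const.sub continuousAt_id)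
        (by simpa using abs_sub_centered_lt hmono hdiff hbound k)
  obtain ⟨ε, hεk, hεpos⟩ := (hε.and self_mem_nhdsWithin).exists
  refine ⟨ε, hεpos, fun v => ?_⟩
  have hcentered := sum_centered_mul_le v
  have hJ : ∑ k, (I k - (2 * k + 1 - N) / 2) * v k ≤ (L / 2 - ε) * ∑ k, |v k| := by
    rw [mul_sum]
    refine sum_le_sum fun k _ => (le_abs_self _).trans ?_
    rw [abs_mul]
    exact mul_le_mul_of_nonneg_right (hεk k).le (abs_nonneg _)
  simp only [sub_mul, sum_sub_distrib] at hJ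
  linarith

end BetheNumbers

theorem bethe_existence_uniqueness_general (L N : ℕ) (hL : 0 < L)
    (Inum : Fin N → ℝ) (hmono : StrictMono Inum)
    (hdiff : ∀ k l, ∃ n : ℤ, Inum k - Inum l = n)
    (hbound : ∀ k, -(((L : ℝ) + N - 1) / 2) < Inum k ∧
      Inum k < ((L : ℝ) + N - 1) / 2) :
    ∃! lam : Fin N → ℝ, ∀ k, (1 / π) * arctan (lam k) =
      Inum k / L - (1 / (π * L)) * ∑ l, arctan (lam k - lam l) := by
  have hL' : (0 : ℝ) < L := by exact_mod_cast hL
  obtain ⟨ε, hε, hI⟩ := exists_pos_sum_mul_le hmono hdiff hbound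
  obtain ⟨lam, hmin⟩ := (continuous_yangYangAction (L : ℝ) Inum).exists_forall_le
    (tendsto_yangYangAction_cocompact hL'.le hε hI)
  have hlam := betheResidual_eq_zero_of_forall_le hmin
  simp only [betheEquation_iff hL'.ne']
  exact ⟨lam, hlam, fun mu hmu => (eq_of_betheResidual_eq_zero hL' hlam hmu).symm⟩

/-- For distinct (half-)integer Bethe numbers in the admissible range, there exists a
unique solution of the logarithmic Bethe equations. -/
theorem bethe_existence_uniqueness (L N : ℕ) (hL : 0 < L) (hN : 0 < N)
    (Inum : Fin N → ℝ) (hmono : StrictMono Inum)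
    (hhalf : ∀ k, ∃ n : ℤ, 2 * Inum k = n)
    (hdiff : ∀ k l, ∃ n : ℤ, Inum k - Inum l = n)
    (hbound : ∀ k, -(((L : ℝ) + N - 1) / 2) < Inum k ∧
      Inum k < ((L : ℝ) + N - 1) / 2) :
    ∃! lam : Fin N → ℝ, ∀ k, (1 / π) * arctan (lam k) =
      Inum k / L - (1 / (π * L)) * ∑ l, arctan (lam k - lam l) :=
  bethe_existence_uniqueness_general L N hL Inum hmono hdiff hbound
end

section
/- Let L and N be positive integers, and let real numbers λ_1,…,λ_N and I_1,…,I_N satisfy the logarithmic Bethe equations (1/π)·arctan λ_k = I_k/L − (1/(πL))·∑_{l=1}^N arctan(λ_k − λ_l) for every k. Then for all indices k and l one has λ_k < λ_l if and only if I_k < I_l; in particular λ_k = λ_l if and only if I_k = I_l, so the roots λ_1,…,λ_N are pairwise distinct if and only if the Bethe numbers I_1,…,I_N are pairwise distinct. -/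
open Real Finset

/-- For solutions of the logarithmic Bethe equations, the ordering of the roots matches
the ordering of the Bethe numbers; in particular roots are pairwise distinct iff the
Bethe numbers are. -/
theorem bethe_roots_order (L N : ℕ) (hL : 0 < L) (hN : 0 < N)
    (lam Inum : Fin N → ℝ)
    (hbethe : ∀ k, (1 / π) * arctan (lam k) =
      Inum k / L - (1 / (π * L)) * ∑ l, arctan (lam k - lam l)) :
    (∀ k l, lam k < lam l ↔ Inum k < Inum l) ∧
    (∀ k l, lam k = lam l ↔ Inum k = Inum l) ∧
    (Function.Injective lam ↔ Function.Injective Inum) := by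
  have hLpos : (0:ℝ) < L := by exact_mod_cast hL
  have hπ : (0:ℝ) < π := Real.pi_pos
  set g : ℝ → ℝ := fun x => (1 / π) * arctan x + (1 / (π * L)) * ∑ l, arctan (x - lam l)
    with hg
  have hgmono : StrictMono g := by
    intro a b hab
    have h1 : arctan a < arctan b := Real.arctan_strictMono hab
    have h2 : ∑ l, arctan (a - lam l) < ∑ l, arctan (b - lam l) := by
      apply Finset.sum_lt_sum_of_nonempty
      · exact Finset.univ_nonempty_iff.mpr ⟨⟨0, hN⟩⟩
      · intro i _
        exact Real.arctan_strictMono (by linarith)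
    have hc1 : (0:ℝ) < 1 / π := by positivity
    have hc2 : (0:ℝ) < 1 / (π * L) := by positivity
    simp only [hg]
    nlinarith
  have hkey : ∀ k, g (lam k) = Inum k / L := by
    intro k
    have := hbethe k
    simp only [hg]
    linarith
  have hlt : ∀ k l, lam k < lam l ↔ Inum k < Inum l := by
    intro k l
    rw [← hgmono.lt_iff_lt, hkey k, hkey l, div_lt_div_iff_of_pos_right hLpos]
  have hle : ∀ k l, lam k ≤ lam l ↔ Inum k ≤ Inum l := by
    intro k l
    rw [← not_lt, ← not_lt, hlt]
  have heq : ∀ k l, lam k = lam l ↔ Inum k = Inum l := by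
    intro k l
    rw [le_antisymm_iff, le_antisymm_iff, hle, hle]
  refine ⟨hlt, heq, ?_⟩
  constructor
  · intro h a b hab
    exact h ((heq a b).mpr hab)
  · intro h a b hab
    exact h ((heq a b).mp hab)
end

section
/- Let L and N be positive integers and let λ : [0,∞) → ℂ^N be such that for every φ ≥ 0 one has λ_k(φ) + i ≠ 0 for all k, λ_k(φ) − λ_l(φ) − i ≠ 0 for all k ≠ l, and the twisted Bethe equations ((λ_k(φ) − i)/(λ_k(φ) + i))^L = e^{−2φL}·∏_{l≠k} (λ_k(φ) − λ_l(φ) + i)/(λ_k(φ) − λ_l(φ) − i) hold for every k. Assume that for each index k, either |λ_k(φ)| → ∞ as φ → ∞, or λ_k(φ) converges to a limit μ_k ∈ ℂ as φ → ∞. Then: (a) no index k satisfies |λ_k(φ)| → ∞, so every λ_k(φ) converges to some μ_k ∈ ℂ; (b) for every k there is a positive integer n_k with μ_k = n_k·i; (c) there is an index k with μ_k = i; (d) if μ_k = n·i with n ≥ 2 an integer, then there exists an index l with μ_l = (n−1)·i. -/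
open Complex Filter

section Helpers

lemma bethe_nested_offdiag {N : ℕ} (S : Finset (Fin N)) (f : Fin N → Fin N → ℂ) :
    ∏ k ∈ S, ∏ l ∈ S.erase k, f k l = ∏ p ∈ S.offDiag, f p.1 p.2 := by
  rw [show S.offDiag = (S ×ˢ S).filter (fun p => p.1 ≠ p.2) by ext p; simp [Finset.mem_offDiag, and_assoc],
    Finset.prod_filter, Finset.prod_product]
  refine Finset.prod_congr rfl fun k hk => ?_
  rw [← Finset.prod_filter]
  congr 1
  ext l
  simp [Finset.mem_erase, and_comm, eq_comm, ne_comm]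

lemma bethe_offdiag_prod_one {N : ℕ} (S : Finset (Fin N)) (a : Fin N → ℂ)
    (h : ∀ k l, k ≠ l → a k - a l - I ≠ 0) :
    ∏ p ∈ S.offDiag, (a p.1 - a p.2 + I) / (a p.1 - a p.2 - I) = 1 := by
  refine Finset.prod_involution (fun p _ => (p.2, p.1)) ?_ ?_ ?_ ?_
  · rintro ⟨k, l⟩ hp
    simp only [Finset.mem_offDiag] at hp
    have h1 := h k l hp.2.2
    have h2 := h l k (Ne.symm hp.2.2)
    field_simp
    ring
  · rintro ⟨k, l⟩ hp _
    simp only [Finset.mem_offDiag] at hp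
    simp [Prod.ext_iff]
    intro h'
    exact fun _ => hp.2.2 h'.symm
  · rintro ⟨k, l⟩ hp
    simp only [Finset.mem_offDiag] at hp ⊢
    exact ⟨hp.2.1, hp.1, Ne.symm hp.2.2⟩
  · rintro ⟨k, l⟩ hp
    rfl

lemma bethe_ratio_identity {L N : ℕ} (a : Fin N → ℂ) (E : ℂ)
    (h2 : ∀ k l, k ≠ l → a k - a l - I ≠ 0)
    (hb : ∀ k, ((a k - I) / (a k + I)) ^ L =
      E * ∏ l ∈ Finset.univ.erase k, (a k - a l + I) / (a k - a l - I))
    (S : Finset (Fin N)) :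
    ∏ k ∈ S, ((a k - I) / (a k + I)) ^ L =
      E ^ S.card * ∏ k ∈ S, ∏ l ∈ Sᶜ, (a k - a l + I) / (a k - a l - I) := by
  have split : ∀ k ∈ S, (∏ l ∈ Finset.univ.erase k, (a k - a l + I) / (a k - a l - I))
      = (∏ l ∈ S.erase k, (a k - a l + I) / (a k - a l - I)) *
        ∏ l ∈ Sᶜ, (a k - a l + I) / (a k - a l - I) := by
    intro k hk
    rw [← Finset.prod_union]
    · congr 1
      ext l
      simp only [Finset.mem_erase, Finset.mem_union, Finset.mem_compl, Finset.mem_univ,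
        and_true]
      constructor
      · intro hl
        by_cases hlS : l ∈ S
        · exact Or.inl ⟨hl, hlS⟩
        · exact Or.inr hlS
      · rintro (⟨hl, _⟩ | hl)
        · exact hl
        · exact fun h => hl (h ▸ hk)
    · exact Finset.disjoint_left.2 fun l hl hl' =>
        (Finset.mem_compl.1 hl') (Finset.mem_erase.1 hl).2
  calc ∏ k ∈ S, ((a k - I) / (a k + I)) ^ L
      = ∏ k ∈ S, (E * ((∏ l ∈ S.erase k, (a k - a l + I) / (a k - a l - I)) *
          ∏ l ∈ Sᶜ, (a k - a l + I) / (a k - a l - I))) := by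
        refine Finset.prod_congr rfl fun k hk => ?_
        rw [hb k, split k hk]
    _ = E ^ S.card * ((∏ k ∈ S, ∏ l ∈ S.erase k, (a k - a l + I) / (a k - a l - I)) *
          ∏ k ∈ S, ∏ l ∈ Sᶜ, (a k - a l + I) / (a k - a l - I)) := by
        rw [Finset.prod_mul_distrib, Finset.prod_mul_distrib, Finset.prod_const]
    _ = E ^ S.card * ∏ k ∈ S, ∏ l ∈ Sᶜ, (a k - a l + I) / (a k - a l - I) := by
        rw [bethe_nested_offdiag, bethe_offdiag_prod_one S a h2, one_mul]

lemma bethe_poly_identity {L N : ℕ} (a : Fin N → ℂ) (E : ℂ)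
    (h1 : ∀ k, a k + I ≠ 0)
    (h2 : ∀ k l, k ≠ l → a k - a l - I ≠ 0)
    (hb : ∀ k, ((a k - I) / (a k + I)) ^ L =
      E * ∏ l ∈ Finset.univ.erase k, (a k - a l + I) / (a k - a l - I))
    (S : Finset (Fin N)) :
    (∏ k ∈ S, (a k - I) ^ L) * ∏ k ∈ S, ∏ l ∈ Sᶜ, (a k - a l - I) =
      E ^ S.card * ((∏ k ∈ S, (a k + I) ^ L) * ∏ k ∈ S, ∏ l ∈ Sᶜ, (a k - a l + I)) := by
    have R := bethe_ratio_identity a E h2 hb S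
    have hQ1 : (∏ k ∈ S, (a k + I) ^ L) ≠ 0 :=
      Finset.prod_ne_zero_iff.2 fun k _ => pow_ne_zero _ (h1 k)
    have hQ2 : (∏ k ∈ S, ∏ l ∈ Sᶜ, (a k - a l - I)) ≠ 0 :=
      Finset.prod_ne_zero_iff.2 fun k hk => Finset.prod_ne_zero_iff.2 fun l hl =>
        h2 k l (fun h => (Finset.mem_compl.1 hl) (h ▸ hk))
    rw [show ∏ k ∈ S, ((a k - I) / (a k + I)) ^ L
        = (∏ k ∈ S, (a k - I) ^ L) / (∏ k ∈ S, (a k + I) ^ L) by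
      rw [← Finset.prod_div_distrib]; exact Finset.prod_congr rfl fun k _ => div_pow _ _ _] at R
    rw [show ∏ k ∈ S, ∏ l ∈ Sᶜ, (a k - a l + I) / (a k - a l - I)
        = (∏ k ∈ S, ∏ l ∈ Sᶜ, (a k - a l + I)) / (∏ k ∈ S, ∏ l ∈ Sᶜ, (a k - a l - I)) by
      rw [← Finset.prod_div_distrib]
      refine Finset.prod_congr rfl fun k _ => ?_
      exact (Finset.prod_div_distrib (s := Sᶜ) (f := fun l => a k - a l + I)
        (g := fun l => a k - a l - I))] at R
    rw [← mul_div_assoc] at R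
    rw [div_eq_div_iff hQ1 hQ2] at R
    rw [R]; ring

lemma bethe_E_pow_tendsto_zero (L c : ℕ) (hL : 0 < L) (hc : 0 < c) :
    Tendsto (fun φ : ℝ => ((Real.exp (-2 * φ * L) : ℝ) : ℂ) ^ c) atTop (nhds 0) := by
  have hlin : Tendsto (fun φ : ℝ => (c : ℝ) * (-2 * φ * L)) atTop atBot := by
    have : Tendsto (fun φ : ℝ => φ * (-2 * L * c)) atTop atBot := by
      refine tendsto_id.atTop_mul_const_of_neg ?_
      have hL' : (0:ℝ) < L := by exact_mod_cast hL
      have hc' : (0:ℝ) < c := by exact_mod_cast hc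
      nlinarith
    refine this.congr fun φ => by ring
  have h1 : Tendsto (fun φ : ℝ => Real.exp (-2 * φ * L) ^ c) atTop (nhds 0) := by
    refine (Real.tendsto_exp_atBot.comp hlin).congr fun φ => ?_
    simp only [Function.comp_apply]
    rw [← Real.exp_nat_mul]
  have h2 := (Complex.continuous_ofReal.tendsto (0:ℝ)).comp h1
  simpa only [Function.comp_def, Complex.ofReal_pow, Complex.ofReal_zero] using h2

lemma bethe_ratio_tendsto_one (f : ℝ → ℂ) (c : ℂ)
    (hf : Tendsto (fun φ => ‖f φ‖) atTop atTop)
    (hne : ∀ᶠ φ in atTop, f φ ≠ 0) :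
    Tendsto (fun φ => (f φ + c) / f φ) atTop (nhds 1) := by
  have h0 : Tendsto (fun φ => c / f φ) atTop (nhds 0) := by
    rw [tendsto_zero_iff_norm_tendsto_zero]
    have : Tendsto (fun φ => ‖c‖ / ‖f φ‖) atTop (nhds 0) :=
      Filter.Tendsto.div_atTop tendsto_const_nhds hf
    refine this.congr fun φ => ?_
    rw [norm_div]
  have h1 : Tendsto (fun φ => 1 + c / f φ) atTop (nhds 1) := by
    simpa using tendsto_const_nhds.add h0
  refine h1.congr' ?_
  filter_upwards [hne] with φ hφ
  field_simp

lemma bethe_abs_sub_atTop (f g : ℝ → ℂ) (C : ℝ)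
    (hf : Tendsto (fun φ => ‖f φ‖) atTop atTop)
    (hg : ∀ᶠ φ in atTop, ‖g φ‖ ≤ C) :
    Tendsto (fun φ => ‖f φ - g φ‖) atTop atTop := by
  refine tendsto_atTop_mono' atTop ?_ (tendsto_atTop_add_const_right atTop (-C) hf)
  filter_upwards [hg] with φ hφ
  have h := norm_sub_norm_le (f φ) (g φ)
  linarith

end Helpers

/-- Behaviour of the solutions of the twisted Bethe equations as the twist `φ → ∞`:
no root escapes to infinity, every root converges to a positive integer multiple of `i`,
some root converges to `i`, and if a root converges to `n·i` with `n ≥ 2` then some root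
converges to `(n-1)·i`. -/
theorem twisted_bethe_roots_limit (L N : ℕ) (hL : 0 < L) (hN : 0 < N)
    (lam : ℝ → Fin N → ℂ)
    (h1 : ∀ φ : ℝ, 0 ≤ φ → ∀ k, lam φ k + I ≠ 0)
    (h2 : ∀ φ : ℝ, 0 ≤ φ → ∀ k l, k ≠ l → lam φ k - lam φ l - I ≠ 0)
    (hbethe : ∀ φ : ℝ, 0 ≤ φ → ∀ k,
      ((lam φ k - I) / (lam φ k + I)) ^ L =
        (Real.exp (-2 * φ * L) : ℂ) *
          ∏ l ∈ Finset.univ.erase k,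
            (lam φ k - lam φ l + I) / (lam φ k - lam φ l - I))
    (hdicho : ∀ k, Tendsto (fun φ => ‖lam φ k‖) atTop atTop ∨
      ∃ μ : ℂ, Tendsto (fun φ => lam φ k) atTop (nhds μ)) :
    ∃ μ : Fin N → ℂ,
      (∀ k, ¬ Tendsto (fun φ => ‖lam φ k‖) atTop atTop) ∧
      (∀ k, Tendsto (fun φ => lam φ k) atTop (nhds (μ k))) ∧
      (∀ k, ∃ n : ℕ, 0 < n ∧ μ k = (n : ℂ) * I) ∧
      (∃ k, μ k = I) ∧
      (∀ k, ∀ n : ℕ, 2 ≤ n → μ k = (n : ℂ) * I →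
        ∃ l, μ l = ((n : ℂ) - 1) * I) := by
  classical
  -- Step 1: no root escapes to infinity.
  have hnoesc : ∀ k, ¬ Tendsto (fun φ => ‖lam φ k‖) atTop atTop := by
    intro k0 hk0
    set Es : Finset (Fin N) :=
      Finset.univ.filter (fun k => Tendsto (fun φ => ‖lam φ k‖) atTop atTop)
      with hEs
    have hk0m : k0 ∈ Es := Finset.mem_filter.2 ⟨Finset.mem_univ _, hk0⟩
    have hesc : ∀ k ∈ Es, Tendsto (fun φ => ‖lam φ k‖) atTop atTop :=
      fun k hk => (Finset.mem_filter.1 hk).2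
    have hconv : ∀ l, l ∉ Es → ∃ μ, Tendsto (fun φ => lam φ l) atTop (nhds μ) := by
      intro l hl
      refine (hdicho l).resolve_left ?_
      intro h
      exact hl (Finset.mem_filter.2 ⟨Finset.mem_univ _, h⟩)
    choose ν hν using hconv
    set F : ℝ → ℂ := fun φ => ∏ k ∈ Es, ((lam φ k - I) / (lam φ k + I)) ^ L with hF
    -- F tends to 1
    have habs_denom : ∀ k ∈ Es,
        Tendsto (fun φ => ‖lam φ k + I‖) atTop atTop := by
      intro k hk
      have := bethe_abs_sub_atTop (fun φ => lam φ k) (fun _ => -I) 1 (hesc k hk)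
        (Filter.Eventually.of_forall fun φ => by simp)
      refine this.congr fun φ => ?_
      congr 1
      ring
    have hF1 : Tendsto F atTop (nhds 1) := by
      have : Tendsto F atTop (nhds (∏ _k ∈ Es, (1:ℂ))) := by
        refine tendsto_finset_prod _ fun k hk => ?_
        have hr : Tendsto (fun φ => (lam φ k - I) / (lam φ k + I)) atTop (nhds 1) := by
          have := bethe_ratio_tendsto_one (fun φ => lam φ k + I) (-(2:ℂ)*I)
            (habs_denom k hk)
            (by filter_upwards [eventually_ge_atTop (0:ℝ)] with φ hφ; exact h1 φ hφ k)
          refine this.congr fun φ => ?_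
          congr 1
          ring
        simpa using hr.pow L
      simpa using this
    -- F tends to 0
    have hF0 : Tendsto F atTop (nhds 0) := by
      have hEpow := bethe_E_pow_tendsto_zero L Es.card hL (Finset.card_pos.2 ⟨k0, hk0m⟩)
      have hbnd : Tendsto (fun φ => ∏ k ∈ Es, ∏ l ∈ Esᶜ,
          (lam φ k - lam φ l + I) / (lam φ k - lam φ l - I)) atTop
          (nhds (∏ _k ∈ Es, ∏ _l ∈ Esᶜ, (1:ℂ))) := by
        refine tendsto_finset_prod _ fun k hk => tendsto_finset_prod _ fun l hl => ?_
        have hlne : l ∉ Es := Finset.mem_compl.1 hl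
        have hkl : k ≠ l := fun h => hlne (h ▸ hk)
        have habs : Tendsto (fun φ => ‖lam φ k - lam φ l - I‖) atTop atTop := by
          have hgb : ∀ᶠ φ in atTop, ‖lam φ l + I‖ ≤
              ‖ν l hlne + I‖ + 1 := by
            have ht : Tendsto (fun φ => ‖lam φ l + I‖) atTop
                (nhds (‖ν l hlne + I‖)) :=
              (continuous_norm.tendsto _).comp ((hν l hlne).add tendsto_const_nhds)
            exact ht.eventually_le_const (lt_add_one _)
          have := bethe_abs_sub_atTop (fun φ => lam φ k) (fun φ => lam φ l + I)
            (‖ν l hlne + I‖ + 1) (hesc k hk) hgb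
          refine this.congr fun φ => ?_
          congr 1
          ring
        have := bethe_ratio_tendsto_one (fun φ => lam φ k - lam φ l - I) ((2:ℂ)*I)
          habs
          (by filter_upwards [eventually_ge_atTop (0:ℝ)] with φ hφ; exact h2 φ hφ k l hkl)
        refine this.congr fun φ => ?_
        congr 1
        ring
      have hmul : Tendsto (fun φ => ((Real.exp (-2 * φ * L) : ℝ) : ℂ) ^ Es.card *
          ∏ k ∈ Es, ∏ l ∈ Esᶜ, (lam φ k - lam φ l + I) / (lam φ k - lam φ l - I))
          atTop (nhds 0) := by
        simpa using hEpow.mul hbnd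
      refine hmul.congr' ?_
      filter_upwards [eventually_ge_atTop (0:ℝ)] with φ hφ
      exact (bethe_ratio_identity (lam φ) _ (h2 φ hφ) (hbethe φ hφ) Es).symm
    exact absurd (tendsto_nhds_unique hF1 hF0) one_ne_zero
  -- Step 2: all roots converge.
  have hμex : ∀ k, ∃ m : ℂ, Tendsto (fun φ => lam φ k) atTop (nhds m) :=
    fun k => (hdicho k).resolve_left (hnoesc k)
  choose μ hμ using hμex
  -- Step 3: the key dichotomy for nonempty subsets.
  have key : ∀ S : Finset (Fin N), S.Nonempty →
      (∃ k ∈ S, μ k = I) ∨ ∃ k ∈ S, ∃ l, l ∉ S ∧ μ l = μ k - I := by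
    intro S hS
    set A : ℝ → ℂ := fun φ =>
      (∏ k ∈ S, (lam φ k - I) ^ L) * ∏ k ∈ S, ∏ l ∈ Sᶜ, (lam φ k - lam φ l - I) with hA
    have hAlim : Tendsto A atTop
        (nhds ((∏ k ∈ S, (μ k - I) ^ L) * ∏ k ∈ S, ∏ l ∈ Sᶜ, (μ k - μ l - I))) := by
      refine Tendsto.mul ?_ ?_
      · exact tendsto_finset_prod _ fun k _ => ((hμ k).sub tendsto_const_nhds).pow L
      · exact tendsto_finset_prod _ fun k _ => tendsto_finset_prod _ fun l _ =>
          (((hμ k).sub (hμ l)).sub tendsto_const_nhds)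
    have hBlim : Tendsto (fun φ =>
        (∏ k ∈ S, (lam φ k + I) ^ L) * ∏ k ∈ S, ∏ l ∈ Sᶜ, (lam φ k - lam φ l + I)) atTop
        (nhds ((∏ k ∈ S, (μ k + I) ^ L) * ∏ k ∈ S, ∏ l ∈ Sᶜ, (μ k - μ l + I))) := by
      refine Tendsto.mul ?_ ?_
      · exact tendsto_finset_prod _ fun k _ => ((hμ k).add tendsto_const_nhds).pow L
      · exact tendsto_finset_prod _ fun k _ => tendsto_finset_prod _ fun l _ =>
          (((hμ k).sub (hμ l)).add tendsto_const_nhds)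
    have hEpow := bethe_E_pow_tendsto_zero L S.card hL (Finset.card_pos.2 hS)
    have hA0 : Tendsto A atTop (nhds 0) := by
      have hmul : Tendsto (fun φ => ((Real.exp (-2 * φ * L) : ℝ) : ℂ) ^ S.card *
          ((∏ k ∈ S, (lam φ k + I) ^ L) * ∏ k ∈ S, ∏ l ∈ Sᶜ, (lam φ k - lam φ l + I)))
          atTop (nhds 0) := by
        simpa using hEpow.mul hBlim
      refine hmul.congr' ?_
      filter_upwards [eventually_ge_atTop (0:ℝ)] with φ hφ
      exact (bethe_poly_identity (lam φ) _ (h1 φ hφ) (h2 φ hφ) (hbethe φ hφ) S).symm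
    have h0 : (∏ k ∈ S, (μ k - I) ^ L) * ∏ k ∈ S, ∏ l ∈ Sᶜ, (μ k - μ l - I) = 0 :=
      tendsto_nhds_unique hAlim hA0
    rcases mul_eq_zero.1 h0 with h | h
    · obtain ⟨k, hk, hk0⟩ := Finset.prod_eq_zero_iff.1 h
      left
      refine ⟨k, hk, ?_⟩
      have := (pow_eq_zero_iff hL.ne').1 hk0
      linear_combination this
    · obtain ⟨k, hk, hk'⟩ := Finset.prod_eq_zero_iff.1 h
      obtain ⟨l, hl, hl'⟩ := Finset.prod_eq_zero_iff.1 hk'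
      right
      exact ⟨k, hk, l, Finset.mem_compl.1 hl, by linear_combination -hl'⟩
  -- Step 4: every limit is a positive integer multiple of I.
  have hpos : ∀ k, ∃ n : ℕ, 0 < n ∧ μ k = (n : ℂ) * I := by
    by_contra hcon
    push_neg at hcon
    obtain ⟨k0, hk0⟩ := hcon
    by_cases hcase : ∃ m : ℤ, μ k0 = (m : ℂ) * I
    · obtain ⟨m, hm⟩ := hcase
      have hm0 : m ≤ 0 := by
        by_contra hmpos
        push_neg at hmpos
        refine hk0 m.toNat (by omega) ?_
        rw [hm]
        congr 1
        exact_mod_cast (Int.toNat_of_nonneg hmpos.le).symm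
      set S : Finset (Fin N) :=
        Finset.univ.filter (fun k => ∃ m' : ℤ, m' ≤ 0 ∧ μ k = (m' : ℂ) * I) with hSdef
      have hk0S : k0 ∈ S := Finset.mem_filter.2 ⟨Finset.mem_univ _, m, hm0, hm⟩
      rcases key S ⟨k0, hk0S⟩ with ⟨k, hkS, hkI⟩ | ⟨k, hkS, l, hlS, hl⟩
      · obtain ⟨m', hm'0, hm'⟩ := (Finset.mem_filter.1 hkS).2
        rw [hkI] at hm'
        have : m' = 1 := by
          have := hm'.symm
          field_simp at this
          exact_mod_cast this
        omega
      · obtain ⟨m', hm'0, hm'⟩ := (Finset.mem_filter.1 hkS).2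
        refine hlS (Finset.mem_filter.2 ⟨Finset.mem_univ _, m' - 1, by omega, ?_⟩)
        rw [hl, hm']
        push_cast
        ring
    · set S : Finset (Fin N) :=
        Finset.univ.filter (fun k => ∃ m : ℤ, μ k = μ k0 + (m : ℂ) * I) with hSdef
      have hk0S : k0 ∈ S := Finset.mem_filter.2 ⟨Finset.mem_univ _, 0, by push_cast; ring⟩
      rcases key S ⟨k0, hk0S⟩ with ⟨k, hkS, hkI⟩ | ⟨k, hkS, l, hlS, hl⟩
      · obtain ⟨m, hm⟩ := (Finset.mem_filter.1 hkS).2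
        refine hcase ⟨1 - m, ?_⟩
        rw [hkI] at hm
        push_cast
        linear_combination -hm
      · obtain ⟨m, hm⟩ := (Finset.mem_filter.1 hkS).2
        refine hlS (Finset.mem_filter.2 ⟨Finset.mem_univ _, m - 1, ?_⟩)
        rw [hl, hm]
        push_cast
        ring
  refine ⟨μ, hnoesc, hμ, hpos, ?_, ?_⟩
  -- Step 5: some root converges to I.
  · have huniv : (Finset.univ : Finset (Fin N)).Nonempty := ⟨⟨0, hN⟩, Finset.mem_univ _⟩
    rcases key Finset.univ huniv with ⟨k, _, hkI⟩ | ⟨k, _, l, hl, _⟩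
    · exact ⟨k, hkI⟩
    · exact absurd (Finset.mem_univ l) hl
  -- Step 6: descending strings.
  · intro k0 n hn hk0
    by_contra hno
    push_neg at hno
    set S : Finset (Fin N) :=
      Finset.univ.filter (fun k => ∃ m : ℕ, n ≤ m ∧ μ k = (m : ℂ) * I) with hSdef
    have hk0S : k0 ∈ S := Finset.mem_filter.2 ⟨Finset.mem_univ _, n, le_refl _, hk0⟩
    rcases key S ⟨k0, hk0S⟩ with ⟨k, hkS, hkI⟩ | ⟨k, hkS, l, hlS, hl⟩
    · obtain ⟨m, hmn, hm⟩ := (Finset.mem_filter.1 hkS).2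
      rw [hkI] at hm
      have : m = 1 := by
        have := hm.symm
        field_simp at this
        exact_mod_cast this
      omega
    · obtain ⟨m, hmn, hm⟩ := (Finset.mem_filter.1 hkS).2
      by_cases hmn' : n < m
      · refine hlS (Finset.mem_filter.2 ⟨Finset.mem_univ _, m - 1, by omega, ?_⟩) |>.elim
        rw [hl, hm]
        have : ((m - 1 : ℕ) : ℂ) = (m : ℂ) - 1 := by
          push_cast [Nat.cast_sub (by omega : 1 ≤ m)]
          ring
        rw [this]
        ring
      · have hmeq : m = n := by omega
        refine (hno l ?_).elim
        rw [hl, hm, hmeq]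
        ring
end

section
/- Let N be a natural number, let Q be a monic polynomial of degree N over ℂ, and let T be a polynomial over ℂ satisfying the TQ-relation T(λ)·Q(λ) = (λ + i)²·Q(λ + i) + (λ − i)²·Q(λ − i) as an identity of polynomials (equivalently, for all λ ∈ ℂ). Then T(λ) = 2λ² − (N+1)(N+2). -/
open Polynomial Complex

private lemma choose_mul_two (m : ℕ) : ((m + 2).choose 2) * 2 = (m + 1) * (m + 2) := by
  rw [Nat.choose_two_right]
  have he : 2 ∣ (m + 2) * (m + 2 - 1) := by
    simpa [Nat.mul_comm] using (Nat.even_mul_succ_self (m + 1)).two_dvd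
  rw [Nat.div_mul_cancel he]
  have : m + 2 - 1 = m + 1 := rfl
  rw [this]; ring

private lemma comp_coeff_of_le {P : Polynomial ℂ} {m : ℕ} (h : P.natDegree ≤ m + 2) (c : ℂ) :
    (P.comp (X + C c)).coeff m =
      P.coeff m + (m + 1 : ℕ) * P.coeff (m + 1) * c
        + ((m + 2).choose 2 : ℕ) * P.coeff (m + 2) * c ^ 2 := by
  rw [← taylor_apply, Polynomial.taylor_coeff]
  have hd : (Polynomial.hasseDeriv m P).natDegree < 3 := by
    have := Polynomial.natDegree_hasseDeriv_le P m
    omega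
  rw [Polynomial.eval_eq_sum_range' hd]
  simp [Finset.sum_range_succ, Polynomial.hasseDeriv_coeff]
  have h1 : (1 + m).choose m = m + 1 := by
    rw [Nat.add_comm]; exact Nat.choose_succ_self_right m
  have h2 : (2 + m).choose m = (m + 2).choose 2 := by
    have := Nat.choose_symm (n := m + 2) (k := 2) (by omega)
    rw [Nat.add_comm]
    simpa [Nat.add_sub_cancel] using this
  rw [h1, h2]
  push_cast
  ring_nf

/-- For the TQ-relation at `L = 2`, `s = -1`, with `Q` monic of degree `N`, necessarily
`T(λ) = 2λ² − (N+1)(N+2)`. -/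
theorem tq_relation_T (N : ℕ) (Q T : Polynomial ℂ) (hQ : Q.Monic)
    (hdeg : Q.natDegree = N)
    (hTQ : T * Q = (X + C I) ^ 2 * Q.comp (X + C I)
      + (X - C I) ^ 2 * Q.comp (X - C I)) :
    T = C 2 * X ^ 2 - C (((N : ℂ) + 1) * ((N : ℂ) + 2)) := by
  set a : ℂ := ((N : ℂ) + 1) * ((N : ℂ) + 2) with ha
  set T' : Polynomial ℂ := C 2 * X ^ 2 - C a with hT'
  set P : Polynomial ℂ := X ^ 2 * Q with hP
  have hPdeg : P.natDegree = N + 2 := by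
    rw [hP, natDegree_mul (pow_ne_zero _ X_ne_zero) hQ.ne_zero,
      natDegree_X_pow, hdeg]
    ring
  have hcompI : P.comp (X + C I) = (X + C I) ^ 2 * Q.comp (X + C I) := by
    simp [hP, mul_comp, pow_comp]
  have hcompI' : P.comp (X + C (-I)) = (X - C I) ^ 2 * Q.comp (X - C I) := by
    simp [hP, mul_comp, pow_comp, sub_eq_add_neg]
  have hTQ' : (T - T') * Q = P.comp (X + C I) + P.comp (X + C (-I)) - T' * Q := by
    rw [sub_mul, hTQ, hcompI, hcompI']
  have key : ∀ m, N ≤ m → ((T - T') * Q).coeff m = 0 := by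
    intro m hm
    have hP2 : P.natDegree ≤ m + 2 := by omega
    have hQm2 : P.coeff (m + 2) = Q.coeff m := by
      rw [hP]; exact Polynomial.coeff_X_pow_mul Q 2 m
    have hT'Q : (T' * Q).coeff m = 2 * P.coeff m - a * Q.coeff m := by
      rw [hT', sub_mul, mul_assoc]
      simp [hP, coeff_C_mul]
    have hch : (((m + 2).choose 2 : ℕ) : ℂ) * 2 = ((m : ℂ) + 1) * ((m : ℂ) + 2) := by
      exact_mod_cast congrArg (fun n : ℕ => (n : ℂ)) (choose_mul_two m)
    have hfac : (a - ((m : ℂ) + 1) * ((m : ℂ) + 2)) * Q.coeff m = 0 := by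
      rcases hm.eq_or_lt with hEq | hlt
      · rw [← hEq, ha]; ring
      · rw [coeff_eq_zero_of_natDegree_lt (by omega), mul_zero]
    rw [hTQ', Polynomial.coeff_sub, Polynomial.coeff_add,
      comp_coeff_of_le hP2 I, comp_coeff_of_le hP2 (-I), hT'Q, hQm2,
      neg_sq, I_sq]
    push_cast at hch ⊢
    linear_combination hfac - Q.coeff m * hch
  by_contra hne
  have hR : T - T' ≠ 0 := sub_ne_zero.mpr hne
  have hRQ : (T - T') * Q ≠ 0 := mul_ne_zero hR hQ.ne_zero
  have hdg : N ≤ ((T - T') * Q).natDegree := by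
    rw [natDegree_mul hR hQ.ne_zero, hdeg]
    omega
  exact hRQ (leadingCoeff_eq_zero.mp (key _ hdg))
end

section
/- Let Ω ⊆ ℂ be an open set containing the real interval [0,1], let ρ > 0, and let (g_p)_{p≥0} be functions holomorphic on Ω such that the series F(z,w) := ∑_{p≥0} g_p(z)·w^p/p! converges uniformly on every compact subset of Ω × B(0,ρ), where B(0,ρ) is the open disc of radius ρ centered at 0 in ℂ. Then F is holomorphic on Ω × B(0,ρ), and if f is a function of two complex variables analytic in a neighborhood of (0,0) such that for every p the p-th derivative in the second variable satisfies ∂_w^p f(z,0) = g_p(z) for all z in some neighborhood of 0 inside Ω, then F coincides with f on a neighborhood of (0,0). In particular, f admits an analytic continuation to Ω × B(0,ρ) whose value at (x,0) is g₀(x) and whose p-th derivative in the second variable at (x,0) is g_p(x), for every x ∈ [0,1]. -/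
/-!
For fixed `z ∈ Ω`, convergence of the partial sums on `{z} × B(0, ρ)` forces the power series
`∑ (g_p(z) / p!) wᵖ` to have radius at least `ρ`, so `w ↦ F(z, w)` is analytic on `B(0, ρ)` and
its `p`-th derivative at `0` is `g_p(z)`. Locally uniform convergence makes `F` continuous, hence
bounded by some `M` on `B̄(z₀, r) × S(0, R)`; Cauchy's estimate in `w` gives
`|g_p(z)| / p! ≤ M / Rᵖ` there, and Cauchy's estimate in `z` bounds the derivatives of the
`g_p / p!` by `2M / (r Rᵖ)` on `B(z₀, r/2)`. The derivatives of the terms are then summable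
on `B(z₀, r/2) × B(0, s)` for `|w₀| < s < R`, so the series may be differentiated term by term.
Near `(0, 0)`, `f(z, ·)` is the sum of its Taylor series, whose coefficients are those of `F(z, ·)`.
-/

open Complex Metric Filter

open Topology Finset FormalMultilinearSeries
open scoped Nat ENNReal

theorem tendsto_zero_of_tendsto_sum_range {E : Type*} [AddCommGroup E] [TopologicalSpace E]
    [IsTopologicalAddGroup E] {f : ℕ → E} {s : E}
    (h : Tendsto (fun n => ∑ i ∈ range n, f i) atTop (𝓝 s)) : Tendsto f atTop (𝓝 0) := by
  simpa [sum_range_succ] using (h.comp (tendsto_add_atTop_nat 1)).sub h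

theorem FormalMultilinearSeries.ofReal_le_radius_ofScalars {c : ℕ → ℂ} {ρ : ℝ}
    (h : ∀ w ∈ ball (0 : ℂ) ρ, ∃ s, Tendsto (fun n => ∑ p ∈ range n, c p * w ^ p) atTop (𝓝 s)) :
    ENNReal.ofReal ρ ≤ (ofScalars ℂ c).radius := by
  refine ENNReal.le_of_forall_nnreal_lt fun t ht =>
    (ofScalars ℂ c).le_radius_of_tendsto (l := 0) ?_
  have htρ : (t : ℝ) < ρ := by
    simpa using (ENNReal.lt_ofReal_iff_toReal_lt ENNReal.coe_ne_top).1 ht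
  obtain ⟨s, hs⟩ := h t (by simpa using htρ)
  simpa [ofScalars_norm] using (tendsto_zero_of_tendsto_sum_range hs).norm

theorem FormalMultilinearSeries.hasFPowerSeriesOnBall_ofScalars_tsum {𝕜 : Type*}
    [NontriviallyNormedField 𝕜] [CompleteSpace 𝕜] {c : ℕ → 𝕜} {r : ℝ≥0∞} (hr₀ : 0 < r)
    (hr : r ≤ (ofScalars 𝕜 c).radius) :
    HasFPowerSeriesOnBall (fun w => ∑' p, c p * w ^ p) (ofScalars 𝕜 c) 0 r := by
  have := ((ofScalars 𝕜 c).hasFPowerSeriesOnBall (hr₀.trans_le hr)).mono hr₀ hr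
  convert this using 1
  ext w
  simp [FormalMultilinearSeries.sum, mul_comm]

theorem HasFPowerSeriesAt.iteratedDeriv_eq_factorial_mul {𝕜 : Type*} [NontriviallyNormedField 𝕜]
    [CompleteSpace 𝕜] [CharZero 𝕜] {f : 𝕜 → 𝕜} {c : ℕ → 𝕜} {x : 𝕜}
    (hf : HasFPowerSeriesAt f (ofScalars 𝕜 c) x) (n : ℕ) :
    iteratedDeriv n f x = n ! * c n := by
  have := congrFun (ofScalars_series_injective 𝕜 𝕜
    (hf.eq_formalMultilinearSeries hf.analyticAt.hasFPowerSeriesAt)) n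
  rw [this, mul_div_cancel₀ _ (Nat.cast_ne_zero.2 n.factorial_ne_zero)]

theorem norm_smul_snd_add_smul_fst_le {α α' w : ℂ} {p : ℕ} {s A B : ℝ} (hs : 0 < s)
    (hw : ‖w‖ ≤ s) (hα : ‖α‖ ≤ A) (hα' : ‖α'‖ ≤ B) :
    ‖α • ((p * w ^ (p - 1)) • ContinuousLinearMap.snd ℂ ℂ ℂ) +
      w ^ p • α' • ContinuousLinearMap.fst ℂ ℂ ℂ‖ ≤ (A * p / s + B) * s ^ p := by
  have hpow : (p : ℝ) * ‖w‖ ^ (p - 1) ≤ p * s ^ p / s := by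
    rcases p with _ | p
    · simp
    · rw [add_tsub_cancel_right, pow_succ, mul_div_assoc, mul_div_cancel_right₀ _ hs.ne']
      gcongr
  have hA : 0 ≤ A := (norm_nonneg _).trans hα
  calc _ ≤ ‖α‖ * (p * ‖w‖ ^ (p - 1)) + ‖w‖ ^ p * ‖α'‖ := by
        refine (norm_add_le _ _).trans ?_
        simp only [norm_smul, norm_mul, norm_pow, Complex.norm_natCast]
        gcongr _ * ?_ + _ * ?_
        · exact mul_le_of_le_one_right (by positivity) (ContinuousLinearMap.norm_snd_le ..)
        · exact mul_le_of_le_one_right (by positivity) (ContinuousLinearMap.norm_fst_le ..)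
    _ ≤ A * (p * s ^ p / s) + s ^ p * B := by gcongr
    _ = (A * p / s + B) * s ^ p := by ring

theorem norm_deriv_le_of_forall_mem_closedBall_norm_le {E : Type*} [NormedAddCommGroup E]
    [NormedSpace ℂ E] {f : ℂ → E} {z₀ z : ℂ} {r C : ℝ}
    (hf : DifferentiableOn ℂ f (closedBall z₀ r)) (hC : ∀ w ∈ closedBall z₀ r, ‖f w‖ ≤ C)
    (hz : z ∈ ball z₀ (r / 2)) : ‖deriv f z‖ ≤ C / (r / 2) := by
  have hsub : closedBall z (r / 2) ⊆ closedBall z₀ r :=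
    closedBall_subset_closedBall' (by linarith [mem_ball.1 hz])
  exact norm_deriv_le_of_forall_mem_sphere_norm_le (pos_of_mem_ball hz)
    (hf.diffContOnCl_ball hsub) fun w hw => hC w (hsub (sphere_subset_closedBall hw))

theorem differentiableAt_tsum_mul_pow {a : ℕ → ℂ → ℂ} {z₀ w₀ : ℂ} {r R M : ℝ} (hr : 0 < r)
    (ha : ∀ p, DifferentiableOn ℂ (a p) (closedBall z₀ r))
    (hM : ∀ p, ∀ z ∈ closedBall z₀ r, ‖a p z‖ ≤ M / R ^ p) (hw₀ : ‖w₀‖ < R) :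
    DifferentiableAt ℂ (fun q : ℂ × ℂ => ∑' p, a p q.1 * q.2 ^ p) (z₀, w₀) := by
  obtain ⟨s, hw₀s, hsR⟩ := exists_between hw₀
  have hs : 0 < s := (norm_nonneg _).trans_lt hw₀s
  have hR : 0 < R := hs.trans hsR
  have hball : ball z₀ (r / 2) ⊆ ball z₀ r := ball_subset_ball (half_le_self hr.le)
  set U := ball z₀ (r / 2) ×ˢ ball (0 : ℂ) s
  set L : ℕ → ℂ × ℂ → ℂ × ℂ →L[ℂ] ℂ := fun p q =>
    a p q.1 • ((p * q.2 ^ (p - 1)) • ContinuousLinearMap.snd ℂ ℂ ℂ) +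
      q.2 ^ p • deriv (a p) q.1 • ContinuousLinearMap.fst ℂ ℂ ℂ
  have hL : ∀ p, ∀ q ∈ U, HasFDerivAt (fun q : ℂ × ℂ => a p q.1 * q.2 ^ p) (L p q) q := by
    rintro p ⟨z, w⟩ ⟨hz, -⟩
    have hz' : closedBall z₀ r ∈ 𝓝 z :=
      mem_of_superset (isOpen_ball.mem_nhds (hball hz)) ball_subset_closedBall
    exact (((ha p).differentiableAt hz').hasDerivAt.comp_hasFDerivAt _ hasFDerivAt_fst).mul
      ((hasDerivAt_pow p w).comp_hasFDerivAt _ hasFDerivAt_snd)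
  set θ := s / R
  have hLbound : ∀ p, ∀ q ∈ U, ‖L p q‖ ≤ (M / s * p + 2 * M / r) * θ ^ p := by
    rintro p ⟨z, w⟩ ⟨hz, hw⟩
    refine (norm_smul_snd_add_smul_fst_le hs (mem_ball_zero_iff.1 hw).le
      (hM p z (ball_subset_closedBall (hball hz)))
      (norm_deriv_le_of_forall_mem_closedBall_norm_le (ha p) (hM p) hz)).trans_eq ?_
    rw [div_pow]
    field_simp
  have hu : Summable fun p : ℕ => (M / s * p + 2 * M / r) * θ ^ p := by
    have hθ : ‖θ‖ < 1 := by
      rw [Real.norm_of_nonneg (by positivity)]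
      exact (div_lt_one hR).2 hsR
    refine (((summable_pow_mul_geometric_of_norm_lt_one 1 hθ).mul_left (M / s)).add
      ((summable_geometric_of_norm_lt_one hθ).mul_left (2 * M / r))).congr fun p => ?_
    ring
  have hmem : (z₀, w₀) ∈ U := ⟨mem_ball_self (by positivity), mem_ball_zero_iff.2 hw₀s⟩
  have hmem₀ : (z₀, 0) ∈ U := ⟨mem_ball_self (by positivity), mem_ball_self hs⟩
  exact (hasFDerivAt_tsum_of_isPreconnected hu (isOpen_ball.prod isOpen_ball)
    ((convex_ball _ _).prod (convex_ball _ _)).isPreconnected hL hLbound hmem₀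
    (hasSum_single 0 fun n hn => by simp [hn]).summable hmem).differentiableAt

theorem differentiableOn_tsum_mul_pow {U : Set ℂ} {ρ : ℝ} {a : ℕ → ℂ → ℂ} (hU : IsOpen U)
    (ha : ∀ p, DifferentiableOn ℂ (a p) U)
    (hρ : ∀ z ∈ U, ENNReal.ofReal ρ ≤ (ofScalars ℂ (a · z)).radius)
    (hcont : ContinuousOn (fun q : ℂ × ℂ => ∑' p, a p q.1 * q.2 ^ p) (U ×ˢ ball 0 ρ)) :
    DifferentiableOn ℂ (fun q : ℂ × ℂ => ∑' p, a p q.1 * q.2 ^ p) (U ×ˢ ball 0 ρ) := by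
  rintro ⟨z₀, w₀⟩ ⟨hz₀, hw₀⟩
  obtain ⟨r, hr, hrU⟩ := nhds_basis_closedBall.mem_iff.1 (hU.mem_nhds hz₀)
  obtain ⟨R, hw₀R, hRρ⟩ := exists_between (mem_ball_zero_iff.1 hw₀)
  have hR : 0 < R := (norm_nonneg w₀).trans_lt hw₀R
  have hK := (isCompact_closedBall z₀ r).prod (isCompact_sphere (0 : ℂ) R)
  obtain ⟨M, hM⟩ := hK.exists_bound_of_continuousOn
    (hcont.mono (Set.prod_mono hrU (sphere_subset_ball hRρ)))
  refine (differentiableAt_tsum_mul_pow (M := M) hr (fun p => (ha p).mono hrU)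
    (fun p z hz => ?_) hw₀R).differentiableWithinAt
  have hps := hasFPowerSeriesOnBall_ofScalars_tsum (ENNReal.ofReal_pos.2 (hR.trans hRρ))
    (hρ z (hrU hz))
  have hcl : closedBall (0 : ℂ) R ⊆ eball 0 (ENNReal.ofReal ρ) := by
    rw [eball_ofReal]; exact closedBall_subset_ball hRρ
  have := norm_iteratedDeriv_le_of_forall_mem_sphere_norm_le p hR
    (hps.differentiableOn.diffContOnCl_ball hcl) fun w hw => hM (z, w) ⟨hz, hw⟩
  rwa [hps.hasFPowerSeriesAt.iteratedDeriv_eq_factorial_mul, norm_mul, Complex.norm_natCast,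
    mul_div_assoc, mul_le_mul_iff_right₀ (by positivity)] at this

theorem exists_eqOn_tsum_mul_pow_of_iteratedDeriv {f : ℂ × ℂ → ℂ} {a : ℕ → ℂ → ℂ} {W : Set ℂ}
    (hf : ∃ V ∈ 𝓝 ((0 : ℂ), (0 : ℂ)), ∀ q ∈ V, AnalyticAt ℂ f q) (hW : W ∈ 𝓝 0)
    (hfa : ∀ p, ∀ z ∈ W, iteratedDeriv p (fun w => f (z, w)) 0 = p ! * a p z) :
    ∃ V ∈ 𝓝 ((0 : ℂ), (0 : ℂ)), Set.EqOn (fun q : ℂ × ℂ => ∑' p, a p q.1 * q.2 ^ p) f V := by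
  obtain ⟨V, hV, hfV⟩ := hf
  obtain ⟨ε, hε, hεV⟩ := Metric.mem_nhds_iff.1 hV
  refine ⟨(W ∩ ball 0 ε) ×ˢ ball 0 ε,
    prod_mem_nhds (inter_mem hW (ball_mem_nhds 0 hε)) (ball_mem_nhds 0 hε), ?_⟩
  rintro ⟨z, w⟩ ⟨⟨hzW, hz⟩, hw⟩
  have hdiff : DifferentiableOn ℂ (fun w => f (z, w)) (ball 0 ε) := fun w' hw' =>
    have hzw' := hεV ((ball_prod_same (0 : ℂ) 0 ε).subset (Set.mk_mem_prod hz hw'))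
    ((hfV _ hzw').differentiableAt.comp w'
      ((differentiableAt_const z).prodMk differentiableAt_id)).differentiableWithinAt
  rw [← taylorSeries_eq_on_ball' hw hdiff]
  refine tsum_congr fun p => ?_
  rw [hfa p z hzW, sub_zero, inv_mul_cancel_left₀ (Nat.cast_ne_zero.2 p.factorial_ne_zero)]

/-- Analytic-continuation criterion: if the `g_p` are holomorphic on an open set `Ω`
containing `[0,1]` and the series `F(z,w) = ∑_p g_p(z) w^p/p!` converges uniformly on
compact subsets of `Ω × B(0,ρ)`, then `F` is holomorphic there; if moreover `f` is
analytic near `(0,0)` with `∂_w^p f(z,0) = g_p(z)` for `z` near `0`, then `F` coincides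
with `f` near `(0,0)`; and the values and `w`-derivatives of `F` on `[0,1] × {0}` are
the `g_p`. -/
theorem analytic_continuation_criterion (Ω : Set ℂ) (hΩ : IsOpen Ω)
    (hIcc : (Complex.ofReal '' Set.Icc 0 1) ⊆ Ω)
    (ρ : ℝ) (hρ : 0 < ρ)
    (g : ℕ → ℂ → ℂ) (hg : ∀ p, DifferentiableOn ℂ (g p) Ω)
    (F : ℂ × ℂ → ℂ)
    (hF : ∀ q : ℂ × ℂ, F q = ∑' p : ℕ, g p q.1 * q.2 ^ p / (p.factorial : ℂ))
    (hconv : ∀ K ⊆ Ω ×ˢ ball (0 : ℂ) ρ, IsCompact K →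
      TendstoUniformlyOn
        (fun n (q : ℂ × ℂ) =>
          ∑ p ∈ Finset.range n, g p q.1 * q.2 ^ p / (p.factorial : ℂ))
        F atTop K) :
    DifferentiableOn ℂ F (Ω ×ˢ ball (0 : ℂ) ρ) ∧
    (∀ f : ℂ × ℂ → ℂ,
      (∃ V ∈ nhds ((0 : ℂ), (0 : ℂ)), ∀ q ∈ V, AnalyticAt ℂ f q) →
      (∃ W ∈ nhds (0 : ℂ), W ⊆ Ω ∧
        ∀ p, ∀ z ∈ W, iteratedDeriv p (fun w => f (z, w)) 0 = g p z) →
      ∃ V ∈ nhds ((0 : ℂ), (0 : ℂ)), Set.EqOn F f V) ∧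
    (∀ x : ℝ, x ∈ Set.Icc (0 : ℝ) 1 →
      ∀ p, iteratedDeriv p (fun w => F ((x : ℂ), w)) 0 = g p (x : ℂ)) := by
  set a : ℕ → ℂ → ℂ := fun p z => g p z / (p ! : ℂ)
  have hga : ∀ p z, g p z = (p ! : ℂ) * a p z := fun p z =>
    (mul_div_cancel₀ _ (Nat.cast_ne_zero.2 p.factorial_ne_zero)).symm
  obtain rfl : F = fun q => ∑' p, a p q.1 * q.2 ^ p :=
    funext fun q => by simp only [hF, a, mul_div_right_comm]
  have hlu : TendstoLocallyUniformlyOn (fun n q => ∑ p ∈ range n, a p q.1 * q.2 ^ p)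
      (fun q => ∑' p, a p q.1 * q.2 ^ p) atTop (Ω ×ˢ ball 0 ρ) :=
    (tendstoLocallyUniformlyOn_iff_forall_isCompact (hΩ.prod isOpen_ball)).2 fun K hK hKc => by
      simpa only [a, mul_div_right_comm] using hconv K hK hKc
  have hrad : ∀ z ∈ Ω, ENNReal.ofReal ρ ≤ (ofScalars ℂ (a · z)).radius := fun z hz =>
    ofReal_le_radius_ofScalars fun w hw => ⟨_, (hlu.tendsto_at (Set.mk_mem_prod hz hw) :)⟩
  have hcont : ContinuousOn (fun q : ℂ × ℂ => ∑' p, a p q.1 * q.2 ^ p) (Ω ×ˢ ball 0 ρ) :=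
    hlu.continuousOn (Frequently.of_forall fun n => continuousOn_finsetSum _ fun p _ =>
      (((hg p).continuousOn.div_const _).comp continuousOn_fst fun q hq => hq.1).mul
        (continuousOn_snd.pow p))
  refine ⟨differentiableOn_tsum_mul_pow hΩ (fun p => (hg p).div_const _) hrad hcont,
    fun f hf ⟨W, hW, _, hfg⟩ =>
      exists_eqOn_tsum_mul_pow_of_iteratedDeriv hf hW fun p z hz => hga p z ▸ hfg p z hz,
    fun x hx p => ?_⟩
  rw [(hasFPowerSeriesOnBall_ofScalars_tsum (ENNReal.ofReal_pos.2 hρ)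
    (hrad x (hIcc ⟨x, hx, rfl⟩))).hasFPowerSeriesAt.iteratedDeriv_eq_factorial_mul, hga]
end

section
/- Fix a real number u > 0 and m_c ∈ ℝ, and define g : ℝ → ℝ by g(m) = (2/π)·arctan(u/(m − m_c)²) for m ≠ m_c and g(m_c) = 1. Then g is twice differentiable at m_c, its first derivative at m_c vanishes, and its second derivative at m_c equals −4/(π·u). -/
/-!
For `x > 0` we have `arctan (1/x) = π/2 - arctan x`, so away from `m_c` the function equals
`1 - (2/π) arctan ((m - m_c)² / u)`, which is smooth on all of `ℝ` and takes the value `1` at `m_c`.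
Its derivative `-(4/(πu)) (m - m_c) / (1 + ((m - m_c)²/u)²)` vanishes at `m_c`, and
differentiating once more at `m_c` only sees the linear factor `m - m_c`.
-/

open Real

lemma two_div_pi_mul_arctan_inv_of_pos {x : ℝ} (hx : 0 < x) :
    2 / π * arctan x⁻¹ = 1 - 2 / π * arctan x := by
  rw [arctan_inv_of_pos hx]
  field_simp

noncomputable def arctanBump (u c m : ℝ) : ℝ :=
  1 - 2 / π * arctan ((m - c) ^ 2 / u)

lemma eq_arctanBump {u c : ℝ} (hu : 0 < u) {g : ℝ → ℝ}
    (hg : ∀ m, m ≠ c → g m = 2 / π * arctan (u / (m - c) ^ 2)) (hgc : g c = 1) :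
    g = arctanBump u c := by
  funext m
  rcases eq_or_ne m c with rfl | hm
  · simp [arctanBump, hgc]
  · have hpos : 0 < (m - c) ^ 2 / u := div_pos (sq_pos_of_ne_zero (sub_ne_zero.2 hm)) hu
    rw [hg m hm, ← inv_div ((m - c) ^ 2) u, two_div_pi_mul_arctan_inv_of_pos hpos, arctanBump]

lemma hasDerivAt_arctanBump (u c x : ℝ) :
    HasDerivAt (arctanBump u c)
      (-(4 / (π * u)) * ((x - c) / (1 + ((x - c) ^ 2 / u) ^ 2))) x := by
  have hsq : HasDerivAt (fun m => (m - c) ^ 2 / u) (2 * (x - c) / u) x := by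
    simpa using (((hasDerivAt_id x).sub_const c).pow 2).div_const u
  refine ((hsq.arctan.const_mul (2 / π)).const_sub 1).congr_deriv ?_
  field_simp
  ring

lemma deriv_arctanBump (u c : ℝ) :
    deriv (arctanBump u c) = fun x => -(4 / (π * u)) * ((x - c) / (1 + ((x - c) ^ 2 / u) ^ 2)) :=
  funext fun x => (hasDerivAt_arctanBump u c x).deriv

lemma hasDerivAt_deriv_arctanBump_self (u c : ℝ) :
    HasDerivAt (deriv (arctanBump u c)) (-4 / (π * u)) c := by
  have hden : HasDerivAt (fun m => 1 + ((m - c) ^ 2 / u) ^ 2) 0 c := by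
    simpa using (((((hasDerivAt_id c).sub_const c).pow 2).div_const u).pow 2).const_add 1
  have hnum : HasDerivAt (fun m => m - c) 1 c := (hasDerivAt_id c).sub_const c
  rw [deriv_arctanBump]
  simpa [neg_div] using (hnum.div hden (by simp)).const_mul (-(4 / (π * u)))

/-- The function `g(m) = (2/π) arctan(u/(m−m_c)²)`, extended by `1` at `m_c`, is twice
differentiable at `m_c` with vanishing first derivative and second derivative
`−4/(πu)`. -/
theorem arctan_counterexample_second_deriv (u mc : ℝ) (hu : 0 < u) (g : ℝ → ℝ)
    (hg : ∀ m, m ≠ mc → g m = (2 / π) * arctan (u / (m - mc) ^ 2))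
    (hgc : g mc = 1) :
    HasDerivAt g 0 mc ∧ HasDerivAt (deriv g) (-4 / (π * u)) mc := by
  obtain rfl := eq_arctanBump hu hg hgc
  exact ⟨by simpa using hasDerivAt_arctanBump u mc mc, hasDerivAt_deriv_arctanBump_self u mc⟩
end

section
/- For an integer a, define X_a : ℝ → ℂ by X_a(ξ) = −∫_{−1/2+ξ/2}^{1/2−ξ/2} e^{2πiax} dx − ∫_{3/4}^{3/4+ξ/2} e^{2πiax} dx − ∫_{−3/4−ξ/2}^{−3/4} e^{2πiax} dx. Then for every integer p ≥ 1, the p-th derivative of X_a at ξ = 0 equals ((iπa)^{p−1}/2) · [ (1 − (−1)^p)·(−1)^a + (−1)^p·i^a − (−i)^a ], with the convention (iπa)^0 = 1 (including when a = 0). -/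
/-!
Differentiating once by the fundamental theorem of calculus replaces the three integrals by the
integrand `e_a(x) = exp (2πiax)` at the four moving endpoints `±(1/2 - ξ/2)`, `±(3/4 + ξ/2)`.
Each of these equals `e_a(c) · exp (±iπaξ)` with `e_a(±1/2) = (-1)^a`, `e_a(3/4) = (-i)^a`,
`e_a(-3/4) = i^a`, so the remaining `p - 1` derivatives only contribute factors `(±iπa)^(p-1)`.
-/

open Complex Real intervalIntegral

theorem Continuous.hasDerivAt_intervalIntegral_comp {E : Type*} [NormedAddCommGroup E]
    [NormedSpace ℝ E] [CompleteSpace E] {f : ℝ → E} (hf : Continuous f) {u v : ℝ → ℝ}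
    {u' v' ξ : ℝ} (hu : HasDerivAt u u' ξ) (hv : HasDerivAt v v' ξ) :
    HasDerivAt (fun t => ∫ x in u t..v t, f x) (v' • f (v ξ) - u' • f (u ξ)) ξ := by
  have hprimitive (y : ℝ) : HasDerivAt (fun w => ∫ x in (0 : ℝ)..w, f x) (f y) y :=
    (hf.integral_hasStrictDerivAt 0 y).hasDerivAt
  refine (((hprimitive _).scomp ξ hv).sub ((hprimitive _).scomp ξ hu)).congr_of_eventuallyEq
    (Filter.Eventually.of_forall fun t => ?_)
  exact (integral_interval_sub_left (hf.intervalIntegrable _ _) (hf.intervalIntegrable _ _)).symm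

/-- The moment `∫ g_ξ f` against the step function `g_ξ` of the trajectory. -/
noncomputable def trajectoryIntegral {E : Type*} [NormedAddCommGroup E] [NormedSpace ℝ E]
    (f : ℝ → E) (ξ : ℝ) : E :=
  -(∫ x in (-1/2 + ξ/2 : ℝ)..(1/2 - ξ/2 : ℝ), f x)
    - (∫ x in (3/4 : ℝ)..(3/4 + ξ/2 : ℝ), f x)
    - (∫ x in (-3/4 - ξ/2 : ℝ)..(-3/4 : ℝ), f x)

theorem hasDerivAt_trajectoryIntegral {E : Type*} [NormedAddCommGroup E] [NormedSpace ℝ E]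
    [CompleteSpace E] {f : ℝ → E} (hf : Continuous f) (ξ : ℝ) :
    HasDerivAt (trajectoryIntegral f)
      ((2 : ℝ)⁻¹ • (f (1/2 - ξ/2) + f (-1/2 + ξ/2) - f (3/4 + ξ/2) - f (-3/4 - ξ/2)))
      ξ := by
  have hid := (hasDerivAt_id ξ).div_const 2
  have hcentral :=
    hf.hasDerivAt_intervalIntegral_comp (hid.const_add (-1/2)) (hid.const_sub (1/2))
  have hright :=
    hf.hasDerivAt_intervalIntegral_comp (hasDerivAt_const ξ (3/4)) (hid.const_add (3/4))
  have hleft :=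
    hf.hasDerivAt_intervalIntegral_comp (hid.const_sub (-3/4)) (hasDerivAt_const ξ (-3/4))
  convert (hcentral.neg.sub hright).sub hleft using 1
  · rfl
  · simp only [id_eq]
    module

theorem iteratedDeriv_cexp_ofReal_mul (n : ℕ) (k : ℂ) :
    iteratedDeriv n (fun x : ℝ => cexp (k * x)) = fun x : ℝ => k ^ n * cexp (k * x) := by
  induction n with
  | zero => simp
  | succ n ih =>
    ext x
    rw [iteratedDeriv_succ, ih]
    have hexp : HasDerivAt (fun x : ℝ => cexp (k * x)) (cexp (k * x) * (k * 1)) x :=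
      (((hasDerivAt_id x).ofReal_comp).const_mul k).cexp
    rw [(hexp.const_mul (k ^ n)).deriv]
    ring

theorem cexp_two_pi_I_int_mul (a : ℤ) (x : ℂ) :
    cexp (2 * π * I * a * x) = cexp (2 * π * I * x) ^ a := by
  rw [← exp_int_mul]; ring_nf

theorem cexp_two_pi_I_int_mul_ofReal_add_half (a : ℤ) (c ξ : ℝ) :
    cexp (2 * π * I * a * ↑(c + ξ / 2)) =
      cexp (2 * π * I * a * c) * cexp (I * π * a * ξ) := by
  rw [← Complex.exp_add]; push_cast; ring_nf

theorem cexp_two_pi_I_int_mul_ofReal_sub_half (a : ℤ) (c ξ : ℝ) :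
    cexp (2 * π * I * a * ↑(c - ξ / 2)) =
      cexp (2 * π * I * a * c) * cexp (-(I * π * a) * ξ) := by
  rw [← Complex.exp_add]; push_cast; ring_nf

theorem deriv_trajectoryIntegral_character (a : ℤ) :
    deriv (trajectoryIntegral fun x : ℝ => cexp (2 * π * I * a * x)) = fun ξ : ℝ =>
      ((-1) ^ a - (-I) ^ a) / 2 * cexp (I * π * a * ξ)
        + ((-1) ^ a - I ^ a) / 2 * cexp (-(I * π * a) * ξ) := by
  have hval {c : ℝ} {w : ℂ} (h : cexp (2 * π * I * c) = w) :
      cexp (2 * π * I * a * c) = w ^ a := by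
    rw [cexp_two_pi_I_int_mul, h]
  have hhalf : cexp (2 * π * I * (1/2 : ℝ)) = -1 := by push_cast; ring_nf; simp
  have hneg_half : cexp (2 * π * I * (-1/2 : ℝ)) = -1 := by push_cast; ring_nf; simp
  have hthree_quarters : cexp (2 * π * I * (3/4 : ℝ)) = -I := by
    rw [show 2 * π * I * ((3/4 : ℝ) : ℂ) = π * I + π / 2 * I by push_cast; ring,
      Complex.exp_add]
    simp
  have hneg_three_quarters : cexp (2 * π * I * (-3/4 : ℝ)) = I := by
    rw [show 2 * π * I * ((-3/4 : ℝ) : ℂ) = -(π * I) + -π / 2 * I by push_cast; ring,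
      Complex.exp_add]
    simp
  ext ξ
  rw [(hasDerivAt_trajectoryIntegral (by fun_prop) ξ).deriv]
  simp only [cexp_two_pi_I_int_mul_ofReal_add_half, cexp_two_pi_I_int_mul_ofReal_sub_half,
    hval hhalf, hval hneg_half, hval hthree_quarters, hval hneg_three_quarters, Complex.real_smul]
  push_cast
  ring

/-- The `ξ`-derivatives at `0` of the moments along the first trajectory to the ground
state. -/
theorem trajectory_moment_derivatives (a : ℤ) (Xa : ℝ → ℂ)
    (hX : ∀ ξ : ℝ, Xa ξ =
      -(∫ x in (-1/2 + ξ/2 : ℝ)..(1/2 - ξ/2 : ℝ),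
          Complex.exp (2 * Real.pi * I * (a : ℂ) * (x : ℂ)))
      - (∫ x in (3/4 : ℝ)..(3/4 + ξ/2 : ℝ),
          Complex.exp (2 * Real.pi * I * (a : ℂ) * (x : ℂ)))
      - (∫ x in (-3/4 - ξ/2 : ℝ)..(-3/4 : ℝ),
          Complex.exp (2 * Real.pi * I * (a : ℂ) * (x : ℂ)))) :
    ∀ p : ℕ, 1 ≤ p →
      iteratedDeriv p Xa 0 =
        (I * Real.pi * (a : ℂ)) ^ (p - 1) / 2 *
          ((1 - (-1 : ℂ) ^ p) * (-1 : ℂ) ^ a + (-1 : ℂ) ^ p * I ^ a - (-I) ^ a) := by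
  intro p hp
  obtain ⟨n, rfl⟩ := Nat.exists_eq_add_of_le' hp
  obtain rfl : Xa = trajectoryIntegral fun x : ℝ => cexp (2 * π * I * a * x) := funext hX
  have hsmooth (c k : ℂ) : ContDiffAt ℝ n (fun x : ℝ => c * cexp (k * x)) 0 :=
    (contDiff_const.mul (contDiff_const.mul ofRealCLM.contDiff).cexp).contDiffAt
  rw [iteratedDeriv_succ', deriv_trajectoryIntegral_character,
    iteratedDeriv_fun_add (hsmooth _ _) (hsmooth _ _), iteratedDeriv_const_mul_field,
    iteratedDeriv_const_mul_field, iteratedDeriv_cexp_ofReal_mul, iteratedDeriv_cexp_ofReal_mul,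
    neg_pow (I * π * a)]
  simp only [ofReal_zero, mul_zero, Complex.exp_zero, mul_one, Nat.add_sub_cancel, pow_succ]
  ring
end

section
/- For an integer a, define Y_a : ℝ → ℂ by Y_a(ξ) = −∫_{−1/2+ξ/2}^{1/2−ξ/2} e^{2πiax} dx − ∫_{7/8−ξ/4}^{7/8+ξ/4} e^{2πiax} dx − ∫_{−7/8−ξ/4}^{−7/8+ξ/4} e^{2πiax} dx. Then for every integer p ≥ 1, the p-th derivative of Y_a at ξ = 0 equals ((1 − (−1)^p)/2) · (iπa)^{p−1} · [ (−1)^a − (e^{iπa/4} + e^{−iπa/4})/2^p ], with the convention (iπa)^0 = 1 (including when a = 0). -/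
/-!
Each moment is a sum of integrals of `x ↦ exp (2πiax)` whose endpoints move linearly in `ξ`.
By the fundamental theorem of calculus the `(k+1)`-st `ξ`-derivative of such an integral is
`(endpoint speed)^(k+1) · (2πia)^k · exp (2πia · endpoint)` at each endpoint, uniformly in `a`.
The two endpoints of every interval move with opposite speeds and at `ξ = 0` carry the same
value of the exponential, so the even orders cancel; since `a` is an integer, these values are
`(-1)^a` and `exp (±iπa/4)`.
-/

open Complex

theorem iteratedDeriv_comp_const_add_mul {𝕜 F : Type*} [NontriviallyNormedField 𝕜]
    [NormedAddCommGroup F] [NormedSpace 𝕜 F] {f : 𝕜 → F} {n : ℕ} (hf : ContDiff 𝕜 n f)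
    (a b x : 𝕜) :
    iteratedDeriv n (fun t => f (a + b * t)) x = b ^ n • iteratedDeriv n f (a + b * x) := by
  rw [iteratedDeriv_comp_const_smul (f := fun t => f (a + t)) (hf.comp (by fun_prop)) b,
    iteratedDeriv_comp_const_add]

section MovingEndpoints

variable {E : Type*} [NormedAddCommGroup E] [NormedSpace ℝ E]

theorem Continuous.integral_eq_sub_integral {f : ℝ → E} (hf : Continuous f) (a u v : ℝ) :
    ∫ x in u..v, f x = (∫ x in a..v, f x) - ∫ x in a..u, f x :=
  (intervalIntegral.integral_interval_sub_left (hf.intervalIntegrable _ _)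
    (hf.intervalIntegrable _ _)).symm

variable [CompleteSpace E] {f : ℝ → E} {n : ℕ}

theorem ContDiff.integral_right (hf : ContDiff ℝ n f) (a : ℝ) :
    ContDiff ℝ (n + 1) (fun u => ∫ x in a..u, f x) := by
  rw [contDiff_succ_iff_deriv, funext (hf.continuous.deriv_integral f a)]
  exact ⟨fun u => (hf.continuous.integral_hasStrictDerivAt a u).hasDerivAt.differentiableAt,
    by simp, hf⟩

theorem Continuous.iteratedDeriv_succ_integral_right (hf : Continuous f) (a : ℝ) (n : ℕ) :
    iteratedDeriv (n + 1) (fun u => ∫ x in a..u, f x) = iteratedDeriv n f := by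
  rw [iteratedDeriv_succ', funext (hf.deriv_integral f a)]

theorem ContDiff.integral_affine_bounds (hf : ContDiff ℝ n f) (a b c d : ℝ) :
    ContDiff ℝ (n + 1) (fun ξ => ∫ x in (a + b * ξ)..(c + d * ξ), f x) := by
  rw [funext fun ξ => hf.continuous.integral_eq_sub_integral 0 (a + b * ξ) (c + d * ξ)]
  have hG := hf.integral_right 0
  exact (hG.comp (by fun_prop)).sub (hG.comp (by fun_prop))

theorem iteratedDeriv_integral_affine_bounds (hf : ContDiff ℝ n f) (a b c d ξ : ℝ) :
    iteratedDeriv (n + 1) (fun ξ => ∫ x in (a + b * ξ)..(c + d * ξ), f x) ξ =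
      d ^ (n + 1) • iteratedDeriv n f (c + d * ξ) -
        b ^ (n + 1) • iteratedDeriv n f (a + b * ξ) := by
  have hG : ContDiff ℝ (n + 1 : ℕ) (fun u => ∫ x in 0..u, f x) := by
    exact_mod_cast hf.integral_right 0
  have hGc : ContDiff ℝ (n + 1 : ℕ) (fun ξ => ∫ x in 0..(c + d * ξ), f x) :=
    hG.comp (by fun_prop)
  have hGa : ContDiff ℝ (n + 1 : ℕ) (fun ξ => ∫ x in 0..(a + b * ξ), f x) :=
    hG.comp (by fun_prop)
  rw [funext fun ξ => hf.continuous.integral_eq_sub_integral 0 (a + b * ξ) (c + d * ξ),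
    iteratedDeriv_fun_sub hGc.contDiffAt hGa.contDiffAt,
    iteratedDeriv_comp_const_add_mul hG, iteratedDeriv_comp_const_add_mul hG,
    hf.continuous.iteratedDeriv_succ_integral_right]

end MovingEndpoints

theorem contDiff_cexp_const_mul_ofReal (c : ℂ) {n : WithTop ℕ∞} :
    ContDiff ℝ n (fun x : ℝ => cexp (c * x)) :=
  (contDiff_const.mul ofRealCLM.contDiff).cexp

theorem iteratedDeriv_cexp_const_mul_ofReal (c : ℂ) (n : ℕ) :
    iteratedDeriv n (fun x : ℝ => cexp (c * x)) = fun x : ℝ => c ^ n * cexp (c * x) := by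
  induction n with
  | zero => simp
  | succ n ih =>
    rw [iteratedDeriv_succ, ih]
    funext x
    have h := (((hasDerivAt_id (x : ℂ)).const_mul c).cexp.const_mul (c ^ n)).comp_ofReal
    simp only [id_eq, mul_one] at h
    rw [h.deriv, pow_succ]
    ring

theorem cexp_two_pi_I_int_mul_add_int (a m : ℤ) (z : ℂ) :
    cexp (2 * Real.pi * I * a * (z + m)) = cexp (2 * Real.pi * I * a * z) := by
  rw [mul_add, exp_add, show 2 * Real.pi * I * a * m = (a * m : ℤ) * (2 * Real.pi * I) by
    push_cast; ring, exp_int_mul_two_pi_mul_I, mul_one]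

theorem cexp_two_pi_I_int_mul_half (a : ℤ) :
    cexp (2 * Real.pi * I * a * (1 / 2)) = (-1) ^ a := by
  rw [show 2 * Real.pi * I * a * (1 / 2) = a * (Real.pi * I) by ring, exp_int_mul, exp_pi_mul_I]

/-- The `ξ`-derivatives at `0` of the moments along the second trajectory to the ground
state. -/
theorem trajectory2_moment_derivatives (a : ℤ) (Ya : ℝ → ℂ)
    (hY : ∀ ξ : ℝ, Ya ξ =
      -(∫ x in (-1/2 + ξ/2 : ℝ)..(1/2 - ξ/2 : ℝ),
          Complex.exp (2 * Real.pi * I * (a : ℂ) * (x : ℂ)))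
      - (∫ x in (7/8 - ξ/4 : ℝ)..(7/8 + ξ/4 : ℝ),
          Complex.exp (2 * Real.pi * I * (a : ℂ) * (x : ℂ)))
      - (∫ x in (-7/8 - ξ/4 : ℝ)..(-7/8 + ξ/4 : ℝ),
          Complex.exp (2 * Real.pi * I * (a : ℂ) * (x : ℂ)))) :
    ∀ p : ℕ, 1 ≤ p →
      iteratedDeriv p Ya 0 =
        (1 - (-1 : ℂ) ^ p) / 2 * (I * Real.pi * (a : ℂ)) ^ (p - 1) *
          ((-1 : ℂ) ^ a -
            (Complex.exp (I * Real.pi * (a : ℂ) / 4)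
              + Complex.exp (-(I * Real.pi * (a : ℂ)) / 4)) / 2 ^ p) := by
  intro p hp
  obtain ⟨k, rfl⟩ := Nat.exists_eq_add_of_le' hp
  set c : ℂ := 2 * Real.pi * I * a
  have hexp : ContDiff ℝ k (fun x : ℝ => cexp (c * x)) := contDiff_cexp_const_mul_ofReal c
  have hYa : Ya = fun ξ =>
      -(∫ x in (-1/2 + 1/2 * ξ)..(1/2 + -1/2 * ξ), cexp (c * x))
      - (∫ x in (7/8 + -1/4 * ξ)..(7/8 + 1/4 * ξ), cexp (c * x))
      - (∫ x in (-7/8 + -1/4 * ξ)..(-7/8 + 1/4 * ξ), cexp (c * x)) := by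
    funext ξ
    rw [hY]
    ring_nf
  have hsmooth (α β γ δ : ℝ) : ContDiffAt ℝ (k + 1 : ℕ)
      (fun ξ => ∫ x in (α + β * ξ)..(γ + δ * ξ), cexp (c * x)) 0 := by
    exact_mod_cast (hexp.integral_affine_bounds α β γ δ).contDiffAt
  rw [hYa,
    iteratedDeriv_fun_sub ((hsmooth _ _ _ _).neg.sub (hsmooth _ _ _ _)) (hsmooth _ _ _ _),
    iteratedDeriv_fun_sub (hsmooth _ _ _ _).neg (hsmooth _ _ _ _), iteratedDeriv_fun_neg]
  simp only [iteratedDeriv_integral_affine_bounds hexp, iteratedDeriv_cexp_const_mul_ofReal,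
    mul_zero, add_zero, Complex.real_smul]
  push_cast
  have e_half : cexp (c * (1 / 2)) = (-1) ^ a := cexp_two_pi_I_int_mul_half a
  have e_neg_half : cexp (c * (-1 / 2)) = (-1) ^ a := by
    rw [show (-1 / 2 : ℂ) = 1 / 2 + ((-1 : ℤ) : ℂ) by norm_num, cexp_two_pi_I_int_mul_add_int,
      e_half]
  have e_seven_eighths : cexp (c * (7 / 8)) = cexp (-(I * Real.pi * a) / 4) := by
    rw [show (7 / 8 : ℂ) = -1 / 8 + ((1 : ℤ) : ℂ) by norm_num, cexp_two_pi_I_int_mul_add_int]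
    congr 1; ring
  have e_neg_seven_eighths : cexp (c * (-7 / 8)) = cexp (I * Real.pi * a / 4) := by
    rw [show (-7 / 8 : ℂ) = 1 / 8 + ((-1 : ℤ) : ℂ) by norm_num, cexp_two_pi_I_int_mul_add_int]
    congr 1; ring
  rw [e_half, e_neg_half, e_seven_eighths, e_neg_seven_eighths,
    show c = 2 * (I * Real.pi * a) by ring,
    show (-1 / 4 : ℂ) = -1 * (1 / 2 * (1 / 2)) by norm_num,
    show (1 / 4 : ℂ) = 1 / 2 * (1 / 2) by norm_num,
    show (-1 / 2 : ℂ) = -1 * (1 / 2) by norm_num]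
  simp only [mul_pow, one_div, inv_pow]
  field_simp
  ring
end
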